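/- arXiv:2308.08368 — 5 statements merged into one kernel-verified Lean document; each statement's English description precedes it below -/
import Mathlib

section
/- Let G be a group, F the standard resolution, and for s,t ∈ G define ψ_{s,t} on the augmented complex F ⊗ F → ℤ → 0 by ψ_{s,t}(1) = s ⊗ t, ψ_{s,t}(x ⊗ y) = (s,x) ⊗ y if x ∈ G^{p+1} with p > 0, and ψ_{s,t}(x ⊗ y) = (s,x) ⊗ y + s ⊗ (t,y) if x ∈ G. Then ψ_{s,t} is a contracting homotopy of F ⊗ F → ℤ → 0 as a complex of ℤ-modules. -/
noncomputable section

open Finsupp TensorProduct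

/-- Tuples of length `n+1` in `G`: the basis of degree-`n` part of the bar resolution. -/
abbrev Tup (G : Type) (n : ℕ) := Fin (n + 1) → G

/-- The total module of the standard (bar) resolution: free `ℤ`-module on all tuples. -/
abbrev Bar (G : Type) : Type := (Σ n : ℕ, Tup G n) →₀ ℤ

/-- The total module of the tensor square of the bar resolution:
free `ℤ`-module on pairs of tuples. -/
abbrev Bar2 (G : Type) : Type := (Σ (p : ℕ) (q : ℕ), Tup G p × Tup G q) →₀ ℤ

variable (G : Type) [Group G]

/-- Basis element of `Bar G` in degree `n`. -/
def bb (n : ℕ) (s : Tup G n) : Bar G := Finsupp.single ⟨n, s⟩ 1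

/-- Basis element of `Bar2 G` in bidegree `(p, q)`. -/
def cc (p q : ℕ) (x : Tup G p) (y : Tup G q) : Bar2 G := Finsupp.single ⟨p, q, (x, y)⟩ 1

/-- The `i`-th face: delete the `i`-th entry of a tuple. -/
def face {n : ℕ} (i : Fin (n + 2)) (s : Tup G (n + 1)) : Tup G n := fun j => s (i.succAbove j)

/-- The simplicial boundary `∂(s₀,…,sₙ) = Σ (-1)ⁱ (s₀,…,ŝᵢ,…,sₙ)` on the bar resolution. -/
def bnd : Bar G →ₗ[ℤ] Bar G :=
  Finsupp.lift (Bar G) ℤ _ fun w =>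
    match w with
    | ⟨0, _⟩ => 0
    | ⟨n + 1, s⟩ => ∑ i : Fin (n + 2), ((-1 : ℤ) ^ (i : ℕ)) • bb G n (face G i s)

/-- The augmentation `ε : F₀ → ℤ` (extended by zero to the total module). -/
def aug : Bar G →ₗ[ℤ] ℤ := Finsupp.lift ℤ ℤ _ fun w => if w.1 = 0 then 1 else 0

/-- The diagonal action of `u ∈ G` on the bar resolution. -/
def act (u : G) : Bar G →ₗ[ℤ] Bar G :=
  Finsupp.lift (Bar G) ℤ _ fun w => bb G w.1 fun j => u * w.2 j

/-- Right translation `τₛ(s₀,…,sₙ) = (s₀s,…,sₙs)`. -/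
def tau (s : G) : Bar G →ₗ[ℤ] Bar G :=
  Finsupp.lift (Bar G) ℤ _ fun w => bb G w.1 fun j => w.2 j * s

/-- The contracting homotopy `ψₜ(s₀,…,sₙ) = (t,s₀,…,sₙ)`. -/
def psi (t : G) : Bar G →ₗ[ℤ] Bar G :=
  Finsupp.lift (Bar G) ℤ _ fun w => bb G (w.1 + 1) (Fin.cons t w.2)

/-- The degree `-1` part of the contracting homotopy: `ψₜ(1) = (t) ∈ F₀`. -/
def psiNeg (t : G) : ℤ →ₗ[ℤ] Bar G := LinearMap.toSpanSingleton ℤ (Bar G) (bb G 0 fun _ => t)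

/-- The degenerate subcomplex `D ⊆ F`, spanned by tuples with two equal consecutive entries. -/
def degen : Submodule ℤ (Bar G) :=
  Submodule.span ℤ
    {z | ∃ (n : ℕ) (s : Tup G n) (i : Fin n), s i.castSucc = s i.succ ∧ z = bb G n s}

/-- The tuple `(s₀,…,sᵢ,sᵢs,…,sₙs)` obtained from `(s₀,…,sₙ)`. -/
def ins (s : G) (n : ℕ) (x : Tup G n) (i : Fin (n + 1)) : Tup G (n + 1) := fun j =>
  if _h : (j : ℕ) ≤ (i : ℕ) then x ⟨(j : ℕ), by have := i.isLt; omega⟩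
  else x ⟨(j : ℕ) - 1, by have := j.isLt; omega⟩ * s

/-- The homotopy `φₛ(s₀,…,sₙ) = Σ (-1)ⁱ (s₀,…,sᵢ,sᵢs,…,sₙs)` from `τₛ` to the identity. -/
def phi (s : G) : Bar G →ₗ[ℤ] Bar G :=
  Finsupp.lift (Bar G) ℤ _ fun w =>
    ∑ i : Fin (w.1 + 1), ((-1 : ℤ) ^ (i : ℕ)) • bb G (w.1 + 1) (ins G s w.1 w.2 i)

/-- The boundary on `F ⊗ F`: `∂(x⊗y) = ∂x⊗y + (-1)^{deg x} x⊗∂y`. -/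
def bnd2 : Bar2 G →ₗ[ℤ] Bar2 G :=
  Finsupp.lift (Bar2 G) ℤ _ fun w =>
    (match w with
     | ⟨0, _, _, _⟩ => 0
     | ⟨p + 1, q, x, y⟩ => ∑ i : Fin (p + 2), ((-1 : ℤ) ^ (i : ℕ)) • cc G p q (face G i x) y)
    + (match w with
       | ⟨_, 0, _, _⟩ => 0
       | ⟨p, q + 1, x, y⟩ =>
           ((-1 : ℤ) ^ p) • ∑ i : Fin (q + 2), ((-1 : ℤ) ^ (i : ℕ)) • cc G p q x (face G i y))

/-- The augmentation `ε ⊗ ε` on `F ⊗ F` (extended by zero to the total module). -/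
def aug2 : Bar2 G →ₗ[ℤ] ℤ :=
  Finsupp.lift ℤ ℤ _ fun w => if w.1 = 0 ∧ w.2.1 = 0 then 1 else 0

/-- The diagonal action of `u ∈ G` on `F ⊗ F`. -/
def act2 (u : G) : Bar2 G →ₗ[ℤ] Bar2 G :=
  Finsupp.lift (Bar2 G) ℤ _ fun w =>
    cc G w.1 w.2.1 (fun j => u * w.2.2.1 j) (fun j => u * w.2.2.2 j)

/-- The twist `τ(x⊗y) = (-1)^{deg x · deg y} y⊗x` on `F ⊗ F`. -/
def tau2 : Bar2 G →ₗ[ℤ] Bar2 G :=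
  Finsupp.lift (Bar2 G) ℤ _ fun w =>
    ((-1 : ℤ) ^ (w.1 * w.2.1)) • cc G w.2.1 w.1 w.2.2.2 w.2.2.1

/-- The contracting homotopy `ψ_{s,t}` of `F ⊗ F → ℤ → 0`. -/
def psi2 (s t : G) : Bar2 G →ₗ[ℤ] Bar2 G :=
  Finsupp.lift (Bar2 G) ℤ _ fun w =>
    match w with
    | ⟨0, q, x, y⟩ =>
        cc G 1 q (Fin.cons s x) y + cc G 0 (q + 1) (fun _ => s) (Fin.cons t y)
    | ⟨p + 1, q, x, y⟩ => cc G (p + 2) q (Fin.cons s x) y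

/-- The degree `-1` part of `ψ_{s,t}`: `1 ↦ s ⊗ t`. -/
def psi2Neg (s t : G) : ℤ →ₗ[ℤ] Bar2 G :=
  LinearMap.toSpanSingleton ℤ (Bar2 G) (cc G 0 0 (fun _ => s) (fun _ => t))

set_option linter.unusedSectionVars false in
lemma lift_single' {M : Type} [AddCommMonoid M] [Module ℤ M] {X : Type} (f : X → M) (a : X) :
    Finsupp.lift M ℤ X f (Finsupp.single a 1) = f a := by
  simp [Finsupp.lift_apply, Finsupp.sum_single_index]

set_option linter.unusedSectionVars false in
lemma face_zero_cons {n : ℕ} (a : G) (x : Tup G n) : face G 0 (Fin.cons a x) = x := by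
  funext j
  simp [face, Fin.zero_succAbove]

set_option linter.unusedSectionVars false in
lemma face_succ_cons {n : ℕ} (a : G) (x : Tup G (n + 1)) (i : Fin (n + 2)) :
    face G i.succ (Fin.cons a x) = Fin.cons a (face G i x) := by
  funext j
  cases j using Fin.cases with
  | zero => simp [face, Fin.succ_succAbove_zero]
  | succ k => simp [face, Fin.succ_succAbove_succ]

set_option linter.unusedSectionVars false in
lemma face_one_cons0 (a : G) (x : Tup G 0) : face G 1 (Fin.cons a x) = fun _ => a := by
  funext j
  fin_cases j
  simp [face, Fin.succAbove]

/-- Extra term of `ψ` in degree `(0,q)`. -/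
def EE (s t : G) (p q : ℕ) (y : Tup G q) : Bar2 G :=
  match p with
  | 0 => cc G 0 (q + 1) (fun _ => s) (Fin.cons t y)
  | _ + 1 => 0

lemma psi2_cc (s t : G) (p q : ℕ) (x : Tup G p) (y : Tup G q) :
    psi2 G s t (cc G p q x y) = cc G (p + 1) q (Fin.cons s x) y + EE G s t p q y := by
  cases p with
  | zero => rw [psi2, cc, lift_single']; rfl
  | succ p => rw [psi2, cc, lift_single', EE, add_zero]

lemma sum_EE (s t : G) (p q : ℕ) (y : Tup G q) :
    ∑ i : Fin (p + 2), ((-1 : ℤ) ^ (i : ℕ)) • EE G s t p q y = 0 := by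
  cases p with
  | zero => rw [Fin.sum_univ_two]; simp
  | succ p => simp [EE]

lemma EE_succ (s t : G) (p q : ℕ) (y : Tup G q) : EE G s t (p + 1) q y = 0 := rfl

lemma bnd2_cc_succ_succ (p q : ℕ) (x : Tup G (p + 1)) (y : Tup G (q + 1)) :
    bnd2 G (cc G (p + 1) (q + 1) x y) =
      (∑ i : Fin (p + 2), ((-1 : ℤ) ^ (i : ℕ)) • cc G p (q + 1) (face G i x) y)
      + ((-1 : ℤ) ^ (p + 1)) • ∑ i : Fin (q + 2), ((-1 : ℤ) ^ (i : ℕ)) • cc G (p + 1) q x (face G i y) := by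
  rw [bnd2, cc, lift_single']

lemma bnd2_cc_succ_zero (p : ℕ) (x : Tup G (p + 1)) (y : Tup G 0) :
    bnd2 G (cc G (p + 1) 0 x y) =
      ∑ i : Fin (p + 2), ((-1 : ℤ) ^ (i : ℕ)) • cc G p 0 (face G i x) y := by
  rw [bnd2, cc, lift_single', add_zero]

lemma bnd2_cc_zero_succ (q : ℕ) (x : Tup G 0) (y : Tup G (q + 1)) :
    bnd2 G (cc G 0 (q + 1) x y) =
      (1 : ℤ) • ∑ i : Fin (q + 2), ((-1 : ℤ) ^ (i : ℕ)) • cc G 0 q x (face G i y) := by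
  rw [bnd2, cc, lift_single', zero_add]; rfl

/-- For all `s, t ∈ G`, `ψ_{s,t}` is a contracting homotopy of the augmented
complex `F ⊗ F → ℤ → 0` of `ℤ`-modules: `(ε⊗ε)ψ_{s,t} = id` on `ℤ`,
`∂ψ_{s,t} + ψ_{s,t}(ε⊗ε) = id` in degree `0`, and `∂ψ_{s,t} + ψ_{s,t}∂ = id` in degrees `≥ 1`. -/
theorem statement4 (s t : G) :
    aug2 G ∘ₗ psi2Neg G s t = LinearMap.id ∧
    (∀ (x y : Tup G 0),
      bnd2 G (psi2 G s t (cc G 0 0 x y)) + psi2Neg G s t (aug2 G (cc G 0 0 x y))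
        = cc G 0 0 x y) ∧
    (∀ (p q : ℕ) (x : Tup G p) (y : Tup G q), 1 ≤ p + q →
      bnd2 G (psi2 G s t (cc G p q x y)) + psi2 G s t (bnd2 G (cc G p q x y))
        = cc G p q x y) := by
  refine ⟨?_, ?_, ?_⟩
  · apply LinearMap.ext_ring
    simp only [LinearMap.comp_apply, psi2Neg, LinearMap.toSpanSingleton_apply, one_smul,
      LinearMap.id_apply]
    rw [aug2, cc, lift_single']
    simp
  · intro x y
    rw [psi2_cc, EE, map_add, bnd2_cc_succ_zero, bnd2_cc_zero_succ]
    rw [show aug2 G (cc G 0 0 x y) = 1 by rw [aug2, cc, lift_single']; simp]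
    rw [Fin.sum_univ_two, Fin.sum_univ_two]
    simp only [psi2Neg, LinearMap.toSpanSingleton_apply, one_smul, face_zero_cons,
      face_one_cons0, Fin.val_zero, pow_zero, Fin.val_one, pow_one, neg_smul, one_smul]
    abel
  · intro p q x y h
    match p, q with
    | 0, 0 => omega
    | 0, q + 1 =>
      rw [psi2_cc, EE, map_add, bnd2_cc_succ_succ, bnd2_cc_zero_succ, bnd2_cc_zero_succ,
        map_smul, map_sum]
      rw [Fin.sum_univ_two (f := fun i => ((-1:ℤ) ^ (i:ℕ)) • cc G 0 (q+1) (face G i (Fin.cons s x)) y)]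
      rw [Fin.sum_univ_succ (f := fun i => ((-1:ℤ) ^ (i:ℕ)) • cc G 0 (q+1) (fun _ => s) (face G i (Fin.cons t y)))]
      simp only [map_smul, psi2_cc, EE, face_zero_cons, face_one_cons0, face_succ_cons,
        Fin.val_zero, pow_zero, one_smul, Fin.val_one, pow_one, Fin.val_succ, pow_succ,
        mul_neg_one, neg_smul, Finset.sum_neg_distrib, smul_add, Finset.sum_add_distrib]
      abel
    | p + 1, 0 =>
      rw [psi2_cc, EE, add_zero, bnd2_cc_succ_zero, bnd2_cc_succ_zero, map_sum,
        Fin.sum_univ_succ]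
      simp only [map_smul, psi2_cc, Fin.val_zero, pow_zero, one_smul, face_zero_cons,
        face_succ_cons, Fin.val_succ, pow_succ, smul_add, Finset.sum_add_distrib,
        mul_neg_one, neg_smul, Finset.sum_neg_distrib, sum_EE]
      abel
    | p + 1, q + 1 =>
      rw [psi2_cc, EE, add_zero, bnd2_cc_succ_succ, bnd2_cc_succ_succ, map_add, map_sum,
        map_smul, map_sum]
      rw [Fin.sum_univ_succ (f := fun i => ((-1:ℤ) ^ (i:ℕ)) • cc G (p+1) (q+1) (face G i (Fin.cons s x)) y)]
      simp only [map_smul, psi2_cc, EE_succ, smul_zero, add_zero, face_zero_cons, face_succ_cons,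
        Fin.val_zero, pow_zero, one_smul, Fin.val_succ, pow_succ,
        mul_neg_one, neg_smul, Finset.sum_neg_distrib, smul_add, Finset.sum_add_distrib, sum_EE]
      abel
end
end

section
/- Let G be a group and F̄ the normalized standard resolution. For all s,t ∈ G, the contracting homotopy ψ_{s,t} of F̄ ⊗ F̄ → ℤ → 0 (defined by ψ_{s,t}(1) = s⊗t, ψ_{s,t}(x⊗y) = (s,x)⊗y for deg x > 0, and ψ_{s,t}(x⊗y) = (s,x)⊗y + s⊗(t,y) for deg x = 0) satisfies ψ_{s,t} ∘ ψ_{s,t} = 0. -/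
noncomputable section

open Finsupp TensorProduct

variable (G : Type) [Group G]

/-- The degenerate subcomplex `C = D⊗F + F⊗D` of `F ⊗ F`. -/
def degen2 : Submodule ℤ (Bar2 G) :=
  Submodule.span ℤ
    {z | ∃ (p q : ℕ) (x : Tup G p) (y : Tup G q),
      ((∃ i : Fin p, x i.castSucc = x i.succ) ∨ (∃ i : Fin q, y i.castSucc = y i.succ)) ∧
      z = cc G p q x y}

/-!
Each branch of `ψ_{s,t}` prepends an entry to one of the two factors: `s` to the left one, and,
in left degree `0`, also `t` to the right one while the left factor becomes `(s)`. Applying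
`ψ_{s,t}` twice therefore prepends the same entry twice to some factor, so every basis tuple
in the image has two equal leading entries and lies in the degenerate subcomplex.
-/

section Psi2Squared

variable {G}

omit [Group G] in
lemma cc_mem_degen2_of_left {p q : ℕ} {x : Tup G p} (y : Tup G q) (i : Fin p)
    (hx : x i.castSucc = x i.succ) : cc G p q x y ∈ degen2 G :=
  Submodule.subset_span ⟨p, q, x, y, Or.inl ⟨i, hx⟩, rfl⟩

omit [Group G] in
lemma cc_mem_degen2_of_right {p q : ℕ} (x : Tup G p) {y : Tup G q} (i : Fin q)
    (hy : y i.castSucc = y i.succ) : cc G p q x y ∈ degen2 G :=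
  Submodule.subset_span ⟨p, q, x, y, Or.inr ⟨i, hy⟩, rfl⟩

omit [Group G] in
lemma single_eq_smul_cc (p q : ℕ) (x : Tup G p) (y : Tup G q) (c : ℤ) :
    (Finsupp.single ⟨p, q, (x, y)⟩ c : Bar2 G) = c • cc G p q x y := by
  rw [cc, Finsupp.smul_single_one]

omit [Group G] in
lemma Bar2.map_mem_of_forall_cc {M : Type} [AddCommGroup M]
    (f : Bar2 G →ₗ[ℤ] M) (N : Submodule ℤ M)
    (h : ∀ (p q : ℕ) (x : Tup G p) (y : Tup G q), f (cc G p q x y) ∈ N) (z : Bar2 G) :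
    f z ∈ N := by
  induction z using Finsupp.induction_linear with
  | zero => simp
  | add a b ha hb => rw [map_add]; exact N.add_mem ha hb
  | single w c =>
    obtain ⟨p, q, x, y⟩ := w
    rw [single_eq_smul_cc, map_smul]
    exact N.smul_mem c (h p q x y)

omit [Group G] in
lemma psi2_cc_zero (s t : G) (q : ℕ) (x : Tup G 0) (y : Tup G q) :
    psi2 G s t (cc G 0 q x y) =
      cc G 1 q (Fin.cons s x) y + cc G 0 (q + 1) (fun _ => s) (Fin.cons t y) := by
  simp [psi2, cc]

omit [Group G] in
lemma psi2_cc_succ (s t : G) (p q : ℕ) (x : Tup G (p + 1)) (y : Tup G q) :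
    psi2 G s t (cc G (p + 1) q x y) = cc G (p + 2) q (Fin.cons s x) y := by
  simp [psi2, cc]

omit [Group G] in
lemma psi2_psi2_cc_mem_degen2 (s t : G) (p q : ℕ) (x : Tup G p) (y : Tup G q) :
    psi2 G s t (psi2 G s t (cc G p q x y)) ∈ degen2 G := by
  cases p with
  | zero =>
    simp only [psi2_cc_zero, psi2_cc_succ, map_add]
    exact add_mem (cc_mem_degen2_of_left y 0 rfl)
      (add_mem (cc_mem_degen2_of_left _ 0 rfl) (cc_mem_degen2_of_right _ 0 rfl))
  | succ p =>
    simp only [psi2_cc_succ]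
    exact cc_mem_degen2_of_left y 0 rfl

end Psi2Squared

/-- On the normalized tensor product complex `F̄ ⊗ F̄`, for all `s, t ∈ G` the
contracting homotopy `ψ_{s,t}` satisfies `ψ_{s,t} ∘ ψ_{s,t} = 0`; equivalently, on `F ⊗ F` the
image of `ψ_{s,t} ∘ ψ_{s,t}` (and of `ψ_{s,t}` applied to `ψ_{s,t}(1) = s ⊗ t`) lies in the
degenerate subcomplex. -/
theorem statement5 (s t : G) :
    (∀ z : Bar2 G, psi2 G s t (psi2 G s t z) ∈ degen2 G) ∧
    psi2 G s t (psi2Neg G s t 1) ∈ degen2 G := by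
  refine ⟨Bar2.map_mem_of_forall_cc ((psi2 G s t).comp (psi2 G s t)) (degen2 G)
    (psi2_psi2_cc_mem_degen2 s t), ?_⟩
  have psi2Neg_one : psi2Neg G s t 1 = cc G 0 0 (fun _ => s) (fun _ => t) := by
    simp [psi2Neg]
  rw [psi2Neg_one, psi2_cc_zero]
  exact add_mem (cc_mem_degen2_of_left _ 0 rfl) (cc_mem_degen2_of_right _ 0 rfl)
end
end

section
/- Let G be a group, F the standard resolution, and n ≥ 0. Suppose γ: F_n → F is a G-linear map whose image is contained in ∂F. Then for any fixed 0 ≤ i ≤ n, the map ω: F_n → F defined on basis elements by ω(s_0,…,s_n) = ψ_{s_i}(γ(s_0,…,s_n)) (where ψ_t is the contracting homotopy ψ_t(x) = (t,x)) is G-linear and satisfies ∂ω = γ. -/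
set_option linter.unusedSectionVars false



noncomputable section

open Finsupp TensorProduct

variable (G : Type) [Group G]

/-- `ω(s₀,…,sₙ) = ψ_{sᵢ}(γ(s₀,…,sₙ))`, for a linear map `γ : Fₙ → F`. -/
def omg (n : ℕ) (i : Fin (n + 1)) (γ : (Tup G n →₀ ℤ) →ₗ[ℤ] Bar G) :
    (Tup G n →₀ ℤ) →ₗ[ℤ] Bar G :=
  Finsupp.lift (Bar G) ℤ _ fun s => psi G (s i) (γ (Finsupp.single s 1))

lemma bnd_bb0 (s : Tup G 0) : bnd G (bb G 0 s) = 0 := by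
  simp [bnd, bb]

lemma bnd_bb (n : ℕ) (s : Tup G (n+1)) :
    bnd G (bb G (n+1) s) = ∑ i : Fin (n+2), ((-1:ℤ)^(i:ℕ)) • bb G n (face G i s) := by
  simp [bnd, bb]

lemma psi_bb (t : G) (n : ℕ) (s : Tup G n) :
    psi G t (bb G n s) = bb G (n+1) (Fin.cons t s) := by
  simp [psi, bb]

lemma act_bb (u : G) (n : ℕ) (s : Tup G n) :
    act G u (bb G n s) = bb G n (fun j => u * s j) := by
  simp [act, bb]

lemma aug_bb (n : ℕ) (s : Tup G n) :
    aug G (bb G n s) = if n = 0 then 1 else 0 := by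
  simp [aug, bb]

lemma bar_ext {M : Type*} [AddCommGroup M] [Module ℤ M] {f g : Bar G →ₗ[ℤ] M}
    (h : ∀ n s, f (bb G n s) = g (bb G n s)) : f = g := by
  apply Finsupp.lhom_ext
  intro a b
  have : (Finsupp.single a b : Bar G) = b • bb G a.1 a.2 := by
    simp [bb, Finsupp.smul_single]
  rw [this, LinearMap.map_smul, LinearMap.map_smul, h]

lemma fin_sa {n : ℕ} (i j : Fin (n+1)) (h : i ≤ j) (k : Fin n) :
    j.succ.succAbove (i.succAbove k) = i.castSucc.succAbove (j.succAbove k) := by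
  rcases i with ⟨i, _⟩; rcases j with ⟨j, _⟩; rcases k with ⟨k, _⟩
  simp only [Fin.le_def] at h
  ext
  simp only [Fin.succAbove, Fin.lt_def, Fin.coe_castSucc, Fin.val_succ]
  split_ifs <;> simp_all <;> omega

lemma face_face {n : ℕ} (i j : Fin (n+2)) (h : i ≤ j) (s : Tup G (n+2)) :
    face G i (face G j.succ s) = face G j (face G i.castSucc s) := by
  funext k
  simp only [face]
  rw [fin_sa i j h k]

lemma face_cons_zero {n : ℕ} (t : G) (s : Tup G n) :
    face G 0 (Fin.cons t s) = s := by
  funext k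
  simp [face, Fin.succAbove]

lemma face_cons_succ {n : ℕ} (t : G) (i : Fin (n+2)) (s : Tup G (n+1)) :
    face G i.succ (Fin.cons t s) = Fin.cons t (face G i s) := by
  funext k
  induction k using Fin.cases with
  | zero => simp [face, Fin.succ_succAbove_zero]
  | succ k => simp [face, Fin.succ_succAbove_succ]

lemma bnd_psi_bb (t : G) (n : ℕ) (s : Tup G n) :
    bnd G (psi G t (bb G n s))
      = bb G n s - psi G t (bnd G (bb G n s)) - psiNeg G t (aug G (bb G n s)) := by
  cases n with
  | zero =>
    rw [psi_bb, bnd_bb, bnd_bb0, aug_bb]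
    rw [Fin.sum_univ_two]
    have h1 : face G (0 : Fin 2) (Fin.cons t s) = s := face_cons_zero G t s
    have h2 : face G (1 : Fin 2) (Fin.cons t s) = fun _ => t := by
      funext j
      have hj : j = 0 := by ext; omega
      subst hj
      simp [face, Fin.succAbove]
    rw [h1, h2]
    simp [psiNeg]
    abel
  | succ m =>
    rw [psi_bb, bnd_bb, bnd_bb, aug_bb]
    rw [Fin.sum_univ_succ]
    rw [face_cons_zero, map_sum]
    simp only [LinearMap.map_smul, psi_bb, face_cons_succ, Fin.val_succ, pow_succ, Fin.val_zero,
      pow_zero, one_smul]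
    simp only [mul_comm, ← smul_smul]
    rw [← Finset.smul_sum]
    simp [sub_eq_add_neg]

lemma dd_bb (k : ℕ) (s : Tup G (k + 2)) :
    bnd G (bnd G (bb G (k+2) s)) = 0 := by
  rw [bnd_bb, map_sum]
  simp only [LinearMap.map_smul, bnd_bb, Finset.smul_sum, smul_smul]
  rw [← Finset.sum_product']
  apply Finset.sum_ninvolution
    (g := fun p : Fin (k+3) × Fin (k+2) =>
      if h : (p.2 : ℕ) < (p.1 : ℕ)
      then (p.2.castSucc, (⟨(p.1 : ℕ) - 1, by have := p.1.isLt; omega⟩ : Fin (k+2)))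
      else (p.2.succ, (⟨(p.1 : ℕ), by have := p.2.isLt; omega⟩ : Fin (k+2))))
  · rintro ⟨i, j⟩
    dsimp only
    by_cases h : (j : ℕ) < (i : ℕ)
    · rw [dif_pos h]
      dsimp only
      have hib : (i : ℕ) - 1 < k + 2 := by have := i.isLt; omega
      have hfe : face G j (face G i s)
          = face G (⟨(i : ℕ) - 1, hib⟩ : Fin (k+2)) (face G j.castSucc s) := by
        have := face_face G j (⟨(i : ℕ) - 1, hib⟩ : Fin (k+2)) (by
          rw [Fin.le_def]; simpa using by omega) s
        have hi : (⟨(i : ℕ) - 1, hib⟩ : Fin (k+2)).succ = i := by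
          ext; simp; omega
        rw [hi] at this
        exact this
      rw [hfe, ← add_smul]
      convert zero_smul ℤ _
      have : (i : ℕ) = ((i : ℕ) - 1) + 1 := by omega
      rw [this]
      simp [pow_succ]
      ring
    · rw [dif_neg h]
      dsimp only
      push_neg at h
      have hib : (i : ℕ) < k + 2 := by have := j.isLt; omega
      have hfe : face G j (face G i s)
          = face G (⟨(i : ℕ), hib⟩ : Fin (k+2)) (face G j.succ s) := by
        have := face_face G (⟨(i : ℕ), hib⟩ : Fin (k+2)) j (by rw [Fin.le_def]; simpa using h) s
        have hi : (⟨(i : ℕ), hib⟩ : Fin (k+2)).castSucc = i := by ext; simp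
        rw [hi] at this
        exact this.symm
      rw [hfe, ← add_smul]
      convert zero_smul ℤ _
      simp [pow_succ]
      ring
  · rintro ⟨i, j⟩ _
    by_cases h : (j : ℕ) < (i : ℕ) <;> simp only [h, dif_pos, dif_neg, not_lt] <;>
      intro hc <;> rw [Prod.ext_iff] at hc <;> obtain ⟨h1, h2⟩ := hc <;>
      rw [Fin.ext_iff] at h1 h2 <;> simp at h1 h2 <;> omega
  · intro a; exact Finset.mem_univ _
  · rintro ⟨i, j⟩
    by_cases h : (j : ℕ) < (i : ℕ)
    · rw [dif_pos h]
      rw [dif_neg (by simp; omega)]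
      ext <;> simp <;> omega
    · rw [dif_neg h]
      push_neg at h
      rw [dif_pos (by simp; omega)]
      ext <;> simp <;> omega

lemma bnd_bnd (x : Bar G) : bnd G (bnd G x) = 0 := by
  have : (bnd G) ∘ₗ (bnd G) = (0 : Bar G →ₗ[ℤ] Bar G) := by
    apply bar_ext
    intro n s
    match n with
    | 0 => simp [bnd_bb0]
    | 1 =>
      simp only [LinearMap.comp_apply, LinearMap.zero_apply, bnd_bb, map_sum]
      simp [bnd_bb0]
    | (k+2) => simpa using dd_bb G k s
  exact LinearMap.congr_fun this x

lemma aug_bnd (x : Bar G) : aug G (bnd G x) = 0 := by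
  have : (aug G) ∘ₗ (bnd G) = (0 : Bar G →ₗ[ℤ] ℤ) := by
    apply bar_ext
    intro n s
    match n with
    | 0 => simp [bnd_bb0]
    | (m+1) =>
      simp only [LinearMap.comp_apply, LinearMap.zero_apply, bnd_bb, map_sum,
        LinearMap.map_smul, aug_bb]
      match m with
      | 0 => simp [Fin.sum_univ_two]
      | (k+1) => simp
  exact LinearMap.congr_fun this x

lemma bnd_psi (t : G) (x : Bar G) :
    bnd G (psi G t x) = x - psi G t (bnd G x) - psiNeg G t (aug G x) := by
  have : (bnd G) ∘ₗ (psi G t)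
      = LinearMap.id - (psi G t) ∘ₗ (bnd G) - (psiNeg G t) ∘ₗ (aug G) := by
    apply bar_ext
    intro n s
    simpa using bnd_psi_bb G t n s
  exact LinearMap.congr_fun this x

lemma act_psi (u t : G) (x : Bar G) :
    act G u (psi G t x) = psi G (u * t) (act G u x) := by
  have : (act G u) ∘ₗ (psi G t) = (psi G (u * t)) ∘ₗ (act G u) := by
    apply bar_ext
    intro n s
    simp only [LinearMap.comp_apply, psi_bb, act_bb]
    congr 1
    funext j
    induction j using Fin.cases with
    | zero => simp
    | succ k => simp
  exact LinearMap.congr_fun this x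

lemma tup_ext {n : ℕ} {M : Type*} [AddCommGroup M] [Module ℤ M]
    {f g : (Tup G n →₀ ℤ) →ₗ[ℤ] M}
    (h : ∀ s : Tup G n, f (Finsupp.single s 1) = g (Finsupp.single s 1)) : f = g := by
  apply Finsupp.lhom_ext
  intro a b
  have : (Finsupp.single a b : Tup G n →₀ ℤ) = b • Finsupp.single a 1 := by
    simp [Finsupp.smul_single]
  rw [this, LinearMap.map_smul, LinearMap.map_smul, h]

lemma omg_single (n : ℕ) (i : Fin (n + 1)) (γ : (Tup G n →₀ ℤ) →ₗ[ℤ] Bar G) (s : Tup G n) :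
    omg G n i γ (Finsupp.single s 1) = psi G (s i) (γ (Finsupp.single s 1)) := by
  simp [omg]

/-- If `γ : Fₙ → F` is `G`-linear with image contained in `∂F`, then for any
`0 ≤ i ≤ n`, the map `ω(s₀,…,sₙ) = ψ_{sᵢ}(γ(s₀,…,sₙ))` is `G`-linear and satisfies `∂ω = γ`. -/
theorem statement7 (n : ℕ) (i : Fin (n + 1)) (γ : (Tup G n →₀ ℤ) →ₗ[ℤ] Bar G)
    (hγG : ∀ (u : G) (s : Tup G n),
      γ (Finsupp.single (fun j => u * s j) 1) = act G u (γ (Finsupp.single s 1)))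
    (hγim : ∀ x, γ x ∈ LinearMap.range (bnd G)) :
    (∀ (u : G) (s : Tup G n),
      omg G n i γ (Finsupp.single (fun j => u * s j) 1)
        = act G u (omg G n i γ (Finsupp.single s 1))) ∧
    bnd G ∘ₗ omg G n i γ = γ := by
  constructor
  · intro u s
    rw [omg_single, omg_single, hγG, act_psi]
  · apply tup_ext
    intro s
    rw [LinearMap.comp_apply, omg_single]
    obtain ⟨y, hy⟩ := hγim (Finsupp.single s 1)
    rw [← hy, bnd_psi, bnd_bnd, aug_bnd, map_zero, map_zero, sub_zero, sub_zero]
end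
end

section
/- Let G be a group and M a G-module, and let C^n(G,M) denote inhomogeneous cochains (functions G^n → M) with the standard differential. For s ∈ G, let (sa)(s_1,…,s_n) = s·a(s^{-1}s_1s,…,s^{-1}s_ns), and define h_s: C^{n+1}(G,M) → C^n(G,M) by h_s(a)(s_1,…,s_n) = Σ_{i=0}^n (-1)^i a(s_1,…,s_i, s, s^{-1}s_{i+1}s,…,s^{-1}s_ns). Then sa − a = h_s(da) + d(h_s(a)) for all a ∈ C^n(G,M). -/
/-!
Write `hₛ(a)(g)` as the alternating sum over `i` of `a(insertConj s g i)`, the tuple with `s`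
inserted at position `i` and the later entries conjugated by `s`. Expanding `hₛ(d a) + d(hₛ a)`,
the terms coming from the zeroth face of `d` cancel in consecutive pairs except for `s • a(s⁻¹gs)`,
those from the last face cancel except for `-a(g)`, and the terms coming from the inner faces cancel
in pairs, because contracting two adjacent entries commutes with `insertConj` up to a shift of
indices.
-/

noncomputable section

variable (G : Type) [Group G]

/-- The differential on inhomogeneous cochains. -/
def dInh {M : Type} [AddCommGroup M] [DistribMulAction G M] (n : ℕ)
    (a : (Fin n → G) → M) : (Fin (n + 1) → G) → M := fun g =>
  g 0 • a (fun j => g j.succ)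
    + ∑ i : Fin n, ((-1 : ℤ) ^ ((i : ℕ) + 1)) •
        a (fun j =>
          if (j : ℕ) < (i : ℕ) then g j.castSucc
          else if (j : ℕ) = (i : ℕ) then g j.castSucc * g j.succ
          else g j.succ)
    + ((-1 : ℤ) ^ (n + 1)) • a (fun j => g j.castSucc)

/-- The homotopy `hₛ` on inhomogeneous cochains:
`hₛ(a)(s₁,…,sₙ) = Σ (-1)ⁱ a(s₁,…,sᵢ,s,s⁻¹sᵢ₊₁s,…,s⁻¹sₙs)`. -/
def hInh {M : Type} [AddCommGroup M] (s : G) (n : ℕ)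
    (a : (Fin (n + 1) → G) → M) : (Fin n → G) → M := fun g =>
  ∑ i : Fin (n + 1), ((-1 : ℤ) ^ (i : ℕ)) •
    a (fun j =>
      if _h1 : (j : ℕ) < (i : ℕ) then g ⟨(j : ℕ), by have := i.isLt; omega⟩
      else if _h2 : (j : ℕ) = (i : ℕ) then s
      else s⁻¹ * g ⟨(j : ℕ) - 1, by have := j.isLt; omega⟩ * s)

/-- The action of `s ∈ G` on inhomogeneous cochains:
`(sa)(s₁,…,sₙ) = s • a(s⁻¹s₁s,…,s⁻¹sₙs)`. -/
def sInh {M : Type} [AddCommGroup M] [DistribMulAction G M] (s : G) (n : ℕ)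
    (a : (Fin n → G) → M) : (Fin n → G) → M := fun g =>
  s • a fun j => s⁻¹ * g j * s

namespace InhomogeneousCochain

variable {G}

/-- Extending a tuple by `1` keeps all index arithmetic in `ℕ`. -/
def toSeq {n : ℕ} (g : Fin n → G) (x : ℕ) : G := if h : x < n then g ⟨x, h⟩ else 1

lemma toSeq_of_lt {n : ℕ} (g : Fin n → G) {x : ℕ} (h : x < n) : toSeq g x = g ⟨x, h⟩ :=
  dif_pos h

lemma toSeq_eq_one {n : ℕ} (g : Fin n → G) {x : ℕ} (h : n ≤ x) : toSeq g x = 1 :=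
  dif_neg (by omega)

def insertConj (s : G) {m : ℕ} (g : Fin m → G) (i : ℕ) : Fin (m + 1) → G := fun j =>
  if (j : ℕ) < i then toSeq g j else if (j : ℕ) = i then s else s⁻¹ * toSeq g (j - 1) * s

def contractAt (k : ℕ) {m : ℕ} (c : Fin (m + 1) → G) : Fin m → G := fun j =>
  if (j : ℕ) < k then c j.castSucc else if (j : ℕ) = k then c j.castSucc * c j.succ else c j.succ

lemma hInh_eq_sum {M : Type} [AddCommGroup M] (s : G) (n : ℕ) (a : (Fin (n + 1) → G) → M)
    (g : Fin n → G) :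
    hInh G s n a g = ∑ i ∈ Finset.range (n + 1), (-1 : ℤ) ^ i • a (insertConj s g i) := by
  rw [← Fin.sum_univ_eq_sum_range (fun i => (-1 : ℤ) ^ i • a (insertConj s g i))]
  refine Finset.sum_congr rfl fun i _ => ?_
  congr 2
  funext j
  simp only [insertConj]
  split_ifs
  · rw [toSeq_of_lt g (by omega)]
  · rfl
  · rw [toSeq_of_lt g (by omega)]

lemma dInh_eq_sum {M : Type} [AddCommGroup M] [DistribMulAction G M] (m : ℕ) (a : (Fin m → G) → M)
    (c : Fin (m + 1) → G) :
    dInh G m a c = c 0 • a (Fin.tail c)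
      + ∑ k ∈ Finset.range m, (-1 : ℤ) ^ (k + 1) • a (contractAt k c)
      + (-1 : ℤ) ^ (m + 1) • a (Fin.init c) := by
  rw [← Fin.sum_univ_eq_sum_range (fun k => (-1 : ℤ) ^ (k + 1) • a (contractAt k c))]
  rfl

section Tuples

variable {n : ℕ} (s : G) (g : Fin (n + 1) → G)

lemma toSeq_tail (x : ℕ) : toSeq (Fin.tail g) x = if x < n then toSeq g (x + 1) else 1 := by
  unfold toSeq Fin.tail
  split_ifs <;> first | rfl | omega

lemma toSeq_init (x : ℕ) : toSeq (Fin.init g) x = if x < n then toSeq g x else 1 := by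
  unfold toSeq Fin.init
  split_ifs <;> first | rfl | omega

lemma toSeq_contractAt (k x : ℕ) : toSeq (contractAt k g) x =
    if x < n then
      (if x < k then toSeq g x else if x = k then toSeq g x * toSeq g (x + 1) else toSeq g (x + 1))
    else 1 := by
  unfold toSeq contractAt
  split_ifs <;> first | rfl | omega

lemma tail_insertConj_zero : Fin.tail (insertConj s g 0) = fun j => s⁻¹ * g j * s := by
  funext j
  simp [Fin.tail, insertConj, toSeq_of_lt g j.isLt]

lemma insertConj_succ_apply_zero (i : ℕ) : insertConj s g (i + 1) 0 = g 0 := by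
  simp [insertConj, toSeq_of_lt]

lemma tail_insertConj_succ (i : ℕ) :
    Fin.tail (insertConj s g (i + 1)) = insertConj s (Fin.tail g) i := by
  funext j
  simp only [Fin.tail, insertConj, Fin.val_succ, toSeq_tail]
  split_ifs <;>
    (try simp (disch := omega) only [toSeq_eq_one, Nat.sub_add_cancel, Nat.add_sub_cancel,
      mul_assoc, mul_one]) <;> omega

lemma init_insertConj {i : ℕ} (hi : i ≤ n) :
    Fin.init (insertConj s g i) = insertConj s (Fin.init g) i := by
  funext j
  simp only [Fin.init, insertConj, Fin.val_castSucc, toSeq_init]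
  split_ifs <;> first | rfl | omega

lemma init_insertConj_last : Fin.init (insertConj s g (n + 1)) = g := by
  funext j
  simp [Fin.init, insertConj, toSeq_of_lt g j.isLt, Nat.lt_succ_iff.mp j.isLt]

lemma contractAt_insertConj_of_lt {k i : ℕ} (hik : i < k) (hk : k ≤ n) :
    contractAt k (insertConj s g i) = insertConj s (contractAt (k - 1) g) i := by
  funext j
  simp only [contractAt, insertConj, Fin.val_castSucc, Fin.val_succ, toSeq_contractAt]
  split_ifs <;>
    (try simp (disch := omega) only [toSeq_eq_one, Nat.sub_add_cancel, Nat.add_sub_cancel,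
      mul_assoc, mul_one, one_mul, inv_mul_cancel_left, mul_inv_cancel_left]) <;> omega

lemma contractAt_insertConj_of_succ_lt {k i : ℕ} (hki : k + 1 < i) (hi : i ≤ n + 1) :
    contractAt k (insertConj s g i) = insertConj s (contractAt k g) (i - 1) := by
  funext j
  simp only [contractAt, insertConj, Fin.val_castSucc, Fin.val_succ, toSeq_contractAt]
  split_ifs <;>
    (try simp (disch := omega) only [toSeq_eq_one, Nat.sub_add_cancel, Nat.add_sub_cancel,
      mul_assoc, mul_one, one_mul, inv_mul_cancel_left, mul_inv_cancel_left]) <;> omega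

lemma contractAt_insertConj_succ (k : ℕ) :
    contractAt k (insertConj s g (k + 1)) = contractAt k (insertConj s g k) := by
  funext j
  simp only [contractAt, insertConj, Fin.val_castSucc, Fin.val_succ]
  split_ifs <;>
    (try simp (disch := omega) only [toSeq_eq_one, Nat.add_sub_cancel,
      mul_assoc, mul_one, one_mul, inv_mul_cancel_left, mul_inv_cancel_left]) <;> omega

end Tuples

section Signs

variable {M : Type*} [AddCommGroup M]

lemma neg_one_pow_smul_add_neg_one_pow_smul {p q : ℕ} (h : (p + q) % 2 = 1) (x : M) :
    (-1 : ℤ) ^ p • x + (-1 : ℤ) ^ q • x = 0 := by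
  rw [← add_smul, neg_one_pow_eq_pow_mod_two (R := ℤ) (n := p),
    neg_one_pow_eq_pow_mod_two (R := ℤ) (n := q)]
  obtain ⟨hp, hq⟩ | ⟨hp, hq⟩ : p % 2 = 0 ∧ q % 2 = 1 ∨ p % 2 = 1 ∧ q % 2 = 0 := by omega
  all_goals simp [hp, hq]

lemma sum_range_succ_add_sum_range_of_add_eq_zero {f g : ℕ → M} {n : ℕ}
    (h : ∀ i < n, f i + g i = 0) :
    ∑ i ∈ Finset.range (n + 1), f i + ∑ i ∈ Finset.range n, g i = f n := by
  rw [Finset.sum_range_succ, add_right_comm, ← Finset.sum_add_distrib,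
    Finset.sum_eq_zero fun i hi => h i (Finset.mem_range.1 hi), zero_add]

lemma sum_range_succ'_add_sum_range_of_add_eq_zero {f g : ℕ → M} {n : ℕ}
    (h : ∀ i < n, f (i + 1) + g i = 0) :
    ∑ i ∈ Finset.range (n + 1), f i + ∑ i ∈ Finset.range n, g i = f 0 := by
  rw [Finset.sum_range_succ', add_right_comm, ← Finset.sum_add_distrib,
    Finset.sum_eq_zero fun i hi => h i (Finset.mem_range.1 hi), zero_add]

end Signs

/-- The terms of `hₛ(d a)` and `d(hₛ a)` coming from the inner faces of `d` cancel in pairs: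
`inl (i, k)` stands for face `k` of `d` in summand `i` of `hₛ(d a)`, `inr (k, i)` for summand `i`
of `hₛ` in face `k` of `d(hₛ a)`. -/
def facePairing : ℕ × ℕ ⊕ ℕ × ℕ → ℕ × ℕ ⊕ ℕ × ℕ
  | .inl (i, k) =>
    if i = k then .inl (k + 1, k) else if i = k + 1 then .inl (k, k)
    else if i < k then .inr (k - 1, i) else .inr (k, i - 1)
  | .inr (k, i) => if i ≤ k then .inl (i, k + 1) else .inl (i + 1, k)

lemma facePairing_facePairing (x : ℕ × ℕ ⊕ ℕ × ℕ) : facePairing (facePairing x) = x := by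
  rcases x with ⟨i, k⟩ | ⟨k, i⟩ <;> grind [facePairing]

lemma facePairing_ne (x : ℕ × ℕ ⊕ ℕ × ℕ) : facePairing x ≠ x := by
  rcases x with ⟨i, k⟩ | ⟨k, i⟩ <;> grind [facePairing]

def innerFaces (n : ℕ) : Finset (ℕ × ℕ ⊕ ℕ × ℕ) :=
  (Finset.range (n + 2) ×ˢ Finset.range (n + 1)).disjSum (Finset.range n ×ˢ Finset.range (n + 1))

lemma facePairing_mem_innerFaces {n : ℕ} {x : ℕ × ℕ ⊕ ℕ × ℕ} (hx : x ∈ innerFaces n) :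
    facePairing x ∈ innerFaces n := by
  rcases x with ⟨i, k⟩ | ⟨k, i⟩ <;>
    grind [facePairing, innerFaces, Finset.inl_mem_disjSum, Finset.inr_mem_disjSum]

section Faces

variable {M : Type*} [AddCommGroup M] {n : ℕ} (s : G) (g : Fin (n + 1) → G)
  (a : (Fin (n + 1) → G) → M)

lemma sum_first_faces [DistribMulAction G M] :
    ∑ i ∈ Finset.range (n + 1 + 1), (-1 : ℤ) ^ i •
        (insertConj s g i 0 • a (Fin.tail (insertConj s g i)))
      + g 0 • ∑ i ∈ Finset.range (n + 1), (-1 : ℤ) ^ i • a (insertConj s (Fin.tail g) i)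
      = s • a fun j => s⁻¹ * g j * s := by
  rw [Finset.smul_sum, sum_range_succ'_add_sum_range_of_add_eq_zero]
  · simp [insertConj, tail_insertConj_zero]
  · intro i _
    rw [insertConj_succ_apply_zero, tail_insertConj_succ, smul_comm (g 0), add_comm]
    exact neg_one_pow_smul_add_neg_one_pow_smul (by omega) _

lemma sum_last_faces :
    ∑ i ∈ Finset.range (n + 1 + 1), (-1 : ℤ) ^ i •
        (-1 : ℤ) ^ (n + 1 + 1) • a (Fin.init (insertConj s g i))
      + (-1 : ℤ) ^ (n + 1) •
          ∑ i ∈ Finset.range (n + 1), (-1 : ℤ) ^ i • a (insertConj s (Fin.init g) i)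
      = -a g := by
  rw [Finset.smul_sum, sum_range_succ_add_sum_range_of_add_eq_zero]
  · rw [init_insertConj_last, smul_smul, ← pow_add, Odd.neg_one_pow ⟨n + 1, by ring⟩, neg_one_zsmul]
  · intro i hi
    rw [init_insertConj s g (by omega : i ≤ n), smul_smul, smul_smul, ← pow_add, ← pow_add]
    exact neg_one_pow_smul_add_neg_one_pow_smul (by omega) _

def innerFaceTerm : ℕ × ℕ ⊕ ℕ × ℕ → M
  | .inl (i, k) => (-1 : ℤ) ^ (i + (k + 1)) • a (contractAt k (insertConj s g i))
  | .inr (k, i) => (-1 : ℤ) ^ (k + 1 + i) • a (insertConj s (contractAt k g) i)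

lemma innerFaceTerm_add_innerFaceTerm_facePairing {x : ℕ × ℕ ⊕ ℕ × ℕ} (hx : x ∈ innerFaces n) :
    innerFaceTerm s g a x + innerFaceTerm s g a (facePairing x) = 0 := by
  rcases x with ⟨i, k⟩ | ⟨k, i⟩ <;>
    simp only [innerFaces, Finset.inl_mem_disjSum, Finset.inr_mem_disjSum, Finset.mem_product,
      Finset.mem_range] at hx <;>
    simp only [facePairing]
  · split_ifs with hik hik' hik''
    · subst hik
      simp only [innerFaceTerm, contractAt_insertConj_succ]
      exact neg_one_pow_smul_add_neg_one_pow_smul (by omega) _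
    · subst hik'
      simp only [innerFaceTerm, contractAt_insertConj_succ]
      exact neg_one_pow_smul_add_neg_one_pow_smul (by omega) _
    · simp only [innerFaceTerm, contractAt_insertConj_of_lt s g hik'' (by omega)]
      exact neg_one_pow_smul_add_neg_one_pow_smul (by omega) _
    · simp only [innerFaceTerm,
        contractAt_insertConj_of_succ_lt s g (by omega : k + 1 < i) (by omega)]
      exact neg_one_pow_smul_add_neg_one_pow_smul (by omega) _
  · split_ifs
    · simp only [innerFaceTerm, contractAt_insertConj_of_lt s g (by omega : i < k + 1) (by omega),
        Nat.add_sub_cancel]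
      exact neg_one_pow_smul_add_neg_one_pow_smul (by omega) _
    · simp only [innerFaceTerm, Nat.add_sub_cancel,
        contractAt_insertConj_of_succ_lt s g (by omega : k + 1 < i + 1) (by omega)]
      exact neg_one_pow_smul_add_neg_one_pow_smul (by omega) _

lemma sum_innerFaceTerm : ∑ x ∈ innerFaces n, innerFaceTerm s g a x = 0 :=
  Finset.sum_involution (fun x _ => facePairing x)
    (fun _ hx => innerFaceTerm_add_innerFaceTerm_facePairing s g a hx)
    (fun x _ _ => facePairing_ne x) (fun _ hx => facePairing_mem_innerFaces hx)
    (fun x _ => facePairing_facePairing x)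

lemma sum_middle_faces :
    ∑ i ∈ Finset.range (n + 1 + 1), (-1 : ℤ) ^ i •
        ∑ k ∈ Finset.range (n + 1), (-1 : ℤ) ^ (k + 1) • a (contractAt k (insertConj s g i))
      + ∑ k ∈ Finset.range n, (-1 : ℤ) ^ (k + 1) •
          ∑ i ∈ Finset.range (n + 1), (-1 : ℤ) ^ i • a (insertConj s (contractAt k g) i)
      = 0 := by
  rw [← sum_innerFaceTerm s g a, innerFaces, Finset.sum_disjSum, Finset.sum_product,
    Finset.sum_product]
  simp only [innerFaceTerm, Finset.smul_sum, smul_smul, ← pow_add]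

end Faces

end InhomogeneousCochain

/-- On inhomogeneous cochains, `sa − a = hₛ(da) + d(hₛ(a))` for every
`a ∈ Cⁿ(G,M)` (the term `d(hₛ(a))` being absent in degree `0`). -/
theorem statement10 (M : Type) [AddCommGroup M] [DistribMulAction G M] (s : G) :
    (∀ (a : (Fin 0 → G) → M) (g : Fin 0 → G),
      sInh G s 0 a g - a g = hInh G s 0 (dInh G 0 a) g) ∧
    (∀ (n : ℕ) (a : (Fin (n + 1) → G) → M) (g : Fin (n + 1) → G),
      sInh G s (n + 1) a g - a g
        = hInh G s (n + 1) (dInh G (n + 1) a) g + dInh G n (hInh G s n a) g) := by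
  refine ⟨fun a g => ?_, fun n a g => ?_⟩
  · have a_const : ∀ x : Fin 0 → G, a x = a g := fun x => congrArg a (Subsingleton.elim x g)
    simp [sInh, hInh, dInh, a_const, sub_eq_add_neg]
  · simp only [sInh, InhomogeneousCochain.hInh_eq_sum, InhomogeneousCochain.dInh_eq_sum, smul_add,
      Finset.sum_add_distrib]
    linear_combination (norm := abel)
      -(InhomogeneousCochain.sum_first_faces s g a + InhomogeneousCochain.sum_middle_faces s g a
        + InhomogeneousCochain.sum_last_faces s g a)
end
end

section
/- Let G be a group and M, N G-modules, with homogeneous cochain complexes C(G,M), C(G,N), C(G,M⊗N). Define the cup product (a∪b)(s_0,…,s_{p+q}) = a(s_0,…,s_p) ⊗ b(s_p,…,s_{p+q}) for a ∈ C^p(G,M), b ∈ C^q(G,N), the twist t: N⊗M → M⊗N, and h: C^p(G,M) ⊗ C^q(G,N) → C^{p+q-1}(G,M⊗N) by h(a⊗b) = 0 if p = 0 or q = 0, and otherwise h(a⊗b)(s_0,…,s_{p+q-1}) = (-1)^{pq+q} Σ_{i=0}^{p-1} (-1)^{(q+1)i} a(s_0,…,s_i,s_{i+q},…,s_{p+q-1})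 ⊗ b(s_i,…,s_{i+q}). Then for all a ∈ C^p(G,M), b ∈ C^q(G,N): (-1)^{pq} t_*(b∪a) − a∪b = h(da ⊗ b + (-1)^p a ⊗ db) + d(h(a⊗b)). -/
noncomputable section

open Finsupp TensorProduct

variable (G : Type) [Group G]

/-- The index set of the total bar resolution: all tuples, of all lengths. -/
abbrev TotTup (G : Type) := Σ n : ℕ, Tup G n

/-- The simplicial differential on (total) homogeneous cochains. -/
def dT {M : Type} [AddCommGroup M] (a : TotTup G → M) : TotTup G → M := fun w =>
  match w with
  | ⟨0, _⟩ => 0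
  | ⟨n + 1, x⟩ => ∑ i : Fin (n + 2), ((-1 : ℤ) ^ (i : ℕ)) • a ⟨n, face G i x⟩

/-- The cup product on (total) homogeneous cochains; for `a` of pure degree `p` and `b` of pure
degree `q` it is `(a∪b)(s₀,…,s_{p+q}) = a(s₀,…,s_p) ⊗ b(s_p,…,s_{p+q})`. -/
def cupT {M N : Type} [AddCommGroup M] [AddCommGroup N]
    (a : TotTup G → M) (b : TotTup G → N) : TotTup G → M ⊗[ℤ] N := fun w =>
  ∑ i : Fin (w.1 + 1),
    a ⟨(i : ℕ), fun j => w.2 ⟨(j : ℕ), by have := j.isLt; have := i.isLt; omega⟩⟩ ⊗ₜ[ℤ]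
      b ⟨w.1 - (i : ℕ), fun j => w.2 ⟨(i : ℕ) + (j : ℕ),
        by have := j.isLt; have := i.isLt; omega⟩⟩

/-- The homotopy `h` on (total) homogeneous cochains; for `a` of pure degree `p` and `b` of pure
degree `q` with `p, q > 0` it is
`h(a⊗b)(s₀,…,s_{p+q-1}) = (-1)^{pq+q} Σ_{i<p} (-1)^{(q+1)i}
  a(s₀,…,sᵢ,s_{i+q},…,s_{p+q-1}) ⊗ b(sᵢ,…,s_{i+q})`,
and it vanishes if `p = 0` or `q = 0`. -/
def hT {M N : Type} [AddCommGroup M] [AddCommGroup N]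
    (a : TotTup G → M) (b : TotTup G → N) : TotTup G → M ⊗[ℤ] N := fun w =>
  ∑ q' : Fin w.1, ∑ i : Fin (w.1 - (q' : ℕ)),
    (((-1 : ℤ) ^ ((w.1 - (q' : ℕ)) * ((q' : ℕ) + 1) + ((q' : ℕ) + 1))) *
      ((-1 : ℤ) ^ (((q' : ℕ) + 2) * (i : ℕ)))) •
      (a ⟨w.1 - (q' : ℕ), fun j =>
          if _h : (j : ℕ) ≤ (i : ℕ) then w.2 ⟨(j : ℕ), by have := i.isLt; omega⟩
          else w.2 ⟨(j : ℕ) + (q' : ℕ), by have := j.isLt; omega⟩⟩ ⊗ₜ[ℤ]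
        b ⟨(q' : ℕ) + 1, fun j => w.2 ⟨(i : ℕ) + (j : ℕ),
          by have := j.isLt; have := i.isLt; have := q'.isLt; omega⟩⟩)


section AuxHomotopy

set_option linter.unusedSectionVars false

open Finset

variable {G : Type} [Group G]

private lemma tt_congr {d d' : ℕ} (h : d = d') (f : Tup G d) (f' : Tup G d')
    (hf : ∀ (j : ℕ) (hj : j < d + 1), f ⟨j, hj⟩ = f' ⟨j, by omega⟩) :
    (⟨d, f⟩ : TotTup G) = ⟨d', f'⟩ := by
  subst h
  have hff : f = f' := funext fun j => by simpa using hf j.1 j.2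
  rw [hff]

private lemma npow_congr {A B : ℕ} (h : A % 2 = B % 2) : ((-1 : ℤ) ^ A) = (-1 : ℤ) ^ B := by
  rcases Nat.even_or_odd A with hA | hA
  · have hB : Even B := Nat.even_iff.mpr (by have := Nat.even_iff.mp hA; omega)
    rw [hA.neg_one_pow, hB.neg_one_pow]
  · have hB : Odd B := Nat.odd_iff.mpr (by have := Nat.odd_iff.mp hA; omega)
    rw [hA.neg_one_pow, hB.neg_one_pow]

private lemma npow_cancel {A B : ℕ} (h : (A + B) % 2 = 1) {M : Type} [AddCommGroup M]
    (t : M) : ((-1 : ℤ) ^ A) • t + ((-1 : ℤ) ^ B) • t = 0 := by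
  rw [← add_smul]
  have hz : ((-1 : ℤ) ^ A) + ((-1 : ℤ) ^ B) = 0 := by
    rcases Nat.even_or_odd A with hA | hA
    · have hB : Odd B := Nat.odd_iff.mpr (by have := Nat.even_iff.mp hA; omega)
      rw [hA.neg_one_pow, hB.neg_one_pow]; ring
    · have hB : Even B := Nat.even_iff.mpr (by have := Nat.odd_iff.mp hA; omega)
      rw [hA.neg_one_pow, hB.neg_one_pow]; ring
  rw [hz, zero_smul]

private lemma dT_zero {M : Type} [AddCommGroup M] (c : TotTup G → M) (x : Tup G 0) :
    dT G c ⟨0, x⟩ = 0 := rfl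

private lemma dT_succ {M : Type} [AddCommGroup M] (c : TotTup G → M) (n : ℕ)
    (x : Tup G (n + 1)) :
    dT G c ⟨n + 1, x⟩ = ∑ i : Fin (n + 2), ((-1 : ℤ) ^ (i : ℕ)) • c ⟨n, face G i x⟩ := rfl

private lemma dT_of_zero {M : Type} [AddCommGroup M] (c : TotTup G → M)
    (hc : ∀ w : TotTup G, c w = 0) (w : TotTup G) : dT G c w = 0 := by
  rcases w with ⟨(_ | n), x⟩
  · rfl
  · rw [dT_succ]
    exact Finset.sum_eq_zero fun k _ => by rw [hc, smul_zero]

private lemma dT_deg {M : Type} [AddCommGroup M] (c : TotTup G → M) (r : ℕ)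
    (hc : ∀ w : TotTup G, w.1 ≠ r → c w = 0) (w : TotTup G) (hw : w.1 ≠ r + 1) :
    dT G c w = 0 := by
  rcases w with ⟨(_ | n), x⟩
  · rfl
  · rw [dT_succ]
    refine Finset.sum_eq_zero fun k _ => ?_
    have hn : n + 1 ≠ r + 1 := hw
    rw [hc ⟨n, face G k x⟩ (show n ≠ r by omega), smul_zero]

/-- `sg k t` : the index map of the `k`-th face. -/
def sg (k t : ℕ) : ℕ := if t < k then t else t + 1

private lemma face_val {n : ℕ} (k : Fin (n + 2)) (y : Tup G (n + 1)) (t : ℕ) (ht : t < n + 1) :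
    face G k y ⟨t, ht⟩ = y ⟨sg (k : ℕ) t, by unfold sg; split <;> omega⟩ := by
  unfold face
  congr 1
  rcases Nat.lt_or_ge t k with h | h
  · rw [Fin.succAbove, if_pos (by simpa [Fin.lt_def] using h)]
    ext
    simp only [Fin.coe_castSucc, sg]
    rw [if_pos h]
  · rw [Fin.succAbove, if_neg (by simp only [Fin.lt_def, Fin.coe_castSucc]; omega)]
    ext
    simp only [Fin.val_succ, sg]
    rw [if_neg (by omega)]

private lemma hT_zero {M N : Type} [AddCommGroup M] [AddCommGroup N]
    (c : TotTup G → M) (d : TotTup G → N) (r s : ℕ)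
    (hc : ∀ w : TotTup G, w.1 ≠ r → c w = 0) (hd : ∀ w : TotTup G, w.1 ≠ s → d w = 0)
    (m : ℕ) (z : Tup G m) (h : ¬(1 ≤ r ∧ 1 ≤ s ∧ m + 1 = r + s)) :
    hT G c d ⟨m, z⟩ = 0 := by
  simp only [hT]
  refine Finset.sum_eq_zero fun qq _ => Finset.sum_eq_zero fun i _ => ?_
  by_cases h1 : (qq : ℕ) + 1 = s
  · by_cases h2 : m - (qq : ℕ) = r
    · exact absurd ⟨by have := i.isLt; omega, by omega,
        by have := qq.isLt; have := i.isLt; omega⟩ h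
    · rw [hc _ h2, zero_tmul, smul_zero]
  · rw [hd _ h1, tmul_zero, smul_zero]

private lemma hT_collapseX {M N : Type} [AddCommGroup M] [AddCommGroup N]
    (c : TotTup G → M) (d : TotTup G → N) (s m r : ℕ)
    (hd : ∀ w : TotTup G, w.1 ≠ s + 1 → d w = 0) (hm : s < m) (hr : m - s = r)
    (z : Tup G m) (X : ℕ → G) (hX : ∀ (t : ℕ) (h : t < m + 1), X t = z ⟨t, h⟩) :
    hT G c d ⟨m, z⟩ = ∑ i ∈ Finset.range r,
      (((-1 : ℤ) ^ (r * (s + 1) + (s + 1))) * ((-1 : ℤ) ^ ((s + 2) * i))) •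
        (c ⟨r, fun j => X (if (j : ℕ) ≤ i then (j : ℕ) else (j : ℕ) + s)⟩ ⊗ₜ[ℤ]
          d ⟨s + 1, fun j => X (i + (j : ℕ))⟩) := by
  simp only [hT]
  have step1 : ∀ qq : Fin m, (∑ i : Fin (m - (qq : ℕ)),
      (((-1 : ℤ) ^ ((m - (qq : ℕ)) * ((qq : ℕ) + 1) + ((qq : ℕ) + 1))) *
        ((-1 : ℤ) ^ (((qq : ℕ) + 2) * (i : ℕ)))) •
        (c ⟨m - (qq : ℕ), fun j =>
            if _h : (j : ℕ) ≤ (i : ℕ) then z ⟨(j : ℕ), by have := i.isLt; omega⟩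
            else z ⟨(j : ℕ) + (qq : ℕ), by have := j.isLt; omega⟩⟩ ⊗ₜ[ℤ]
          d ⟨(qq : ℕ) + 1, fun j => z ⟨(i : ℕ) + (j : ℕ),
            by have := j.isLt; have := i.isLt; have := qq.isLt; omega⟩⟩))
      = (if (qq : ℕ) = s then (∑ i ∈ Finset.range r,
          (((-1 : ℤ) ^ (r * (s + 1) + (s + 1))) * ((-1 : ℤ) ^ ((s + 2) * i))) •
          (c ⟨r, fun j => X (if (j : ℕ) ≤ i then (j : ℕ) else (j : ℕ) + s)⟩ ⊗ₜ[ℤ]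
            d ⟨s + 1, fun j => X (i + (j : ℕ))⟩)) else 0) := by
    intro qq
    by_cases hqs : (qq : ℕ) = s
    · rw [if_pos hqs]
      trans (∑ i : Fin (m - (qq : ℕ)), (fun ii : ℕ =>
          (((-1 : ℤ) ^ (r * (s + 1) + (s + 1))) * ((-1 : ℤ) ^ ((s + 2) * ii))) •
          (c ⟨r, fun j => X (if (j : ℕ) ≤ ii then (j : ℕ) else (j : ℕ) + s)⟩ ⊗ₜ[ℤ]
            d ⟨s + 1, fun j => X (ii + (j : ℕ))⟩)) (i : ℕ))
      · refine Finset.sum_congr rfl fun i _ => ?_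
        have hiv := i.isLt
        rw [show (m - (qq : ℕ)) * ((qq : ℕ) + 1) + ((qq : ℕ) + 1)
            = r * (s + 1) + (s + 1) by rw [hqs, hr],
          show ((qq : ℕ) + 2) * (i : ℕ) = (s + 2) * (i : ℕ) from
            congrArg (· * (i : ℕ)) (by omega)]
        congr 1
        congr 1
        · refine congrArg c (tt_congr (by omega) _ _ fun j hj => ?_)
          dsimp only
          split_ifs with hji
          · rw [hX j (by omega)]
          · rw [hX (j + s) (by omega)]
            exact congrArg z (Fin.ext (by simp only [Fin.val_mk]; omega))
        · refine congrArg d (tt_congr (by omega) _ _ fun j hj => ?_)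
          dsimp only
          rw [hX ((i : ℕ) + j) (by omega)]
      · rw [Fin.sum_univ_eq_sum_range (fun ii : ℕ =>
            (((-1 : ℤ) ^ (r * (s + 1) + (s + 1))) * ((-1 : ℤ) ^ ((s + 2) * ii))) •
            (c ⟨r, fun j => X (if (j : ℕ) ≤ ii then (j : ℕ) else (j : ℕ) + s)⟩ ⊗ₜ[ℤ]
              d ⟨s + 1, fun j => X (ii + (j : ℕ))⟩)) (m - (qq : ℕ)),
          show m - (qq : ℕ) = r by omega]
    · rw [if_neg hqs]
      refine Finset.sum_eq_zero fun i _ => ?_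
      rw [hd _ (show (qq : ℕ) + 1 ≠ s + 1 by omega), tmul_zero, smul_zero]
  rw [Finset.sum_congr rfl fun qq _ => step1 qq,
    Finset.sum_eq_single_of_mem (⟨s, hm⟩ : Fin m) (Finset.mem_univ _)
      (fun qq _ hne => if_neg fun h => hne (Fin.ext h)), if_pos rfl]

private lemma cup_collapse {M N : Type} [AddCommGroup M] [AddCommGroup N]
    (c : TotTup G → M) (d : TotTup G → N) (r s : ℕ)
    (hc : ∀ w : TotTup G, w.1 ≠ r → c w = 0)
    (n : ℕ) (hn : n = r + s) (x : Tup G n) :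
    cupT G c d ⟨n, x⟩ =
      c ⟨r, fun j => x ⟨(j : ℕ), by have := j.isLt; omega⟩⟩ ⊗ₜ[ℤ]
        d ⟨s, fun j => x ⟨r + (j : ℕ), by have := j.isLt; omega⟩⟩ := by
  simp only [cupT]
  rw [Finset.sum_eq_single_of_mem (⟨r, by omega⟩ : Fin (n + 1)) (Finset.mem_univ _)
    (fun i _ hir => by rw [hc _ (fun h => hir (Fin.ext h)), zero_tmul])]
  congr 1
  exact congrArg d (tt_congr (show n - r = s by omega) _ _ fun j hj => rfl)

private lemma cup_zero {M N : Type} [AddCommGroup M] [AddCommGroup N]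
    (c : TotTup G → M) (d : TotTup G → N) (r s : ℕ)
    (hc : ∀ w : TotTup G, w.1 ≠ r → c w = 0) (hd : ∀ w : TotTup G, w.1 ≠ s → d w = 0)
    (n : ℕ) (hn : n ≠ r + s) (x : Tup G n) :
    cupT G c d ⟨n, x⟩ = 0 := by
  simp only [cupT]
  refine Finset.sum_eq_zero fun i _ => ?_
  by_cases hir : (i : ℕ) = r
  · rw [hd _ (show n - (i : ℕ) ≠ s by have := i.isLt; omega), tmul_zero]
  · rw [hc _ hir, zero_tmul]

section Eterms

variable {M N : Type} [AddCommGroup M] [AddCommGroup N]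

/-- Normal form of the terms of `d(h(a⊗b))`. -/
def E1 (a : TotTup G → M) (b : TotTup G → N) (p q : ℕ) (X : ℕ → G) (k i : ℕ) :
    M ⊗[ℤ] N :=
  ((-1 : ℤ) ^ (p * q + (q + 1) * i + q + k)) •
    (a ⟨p, fun j => X (sg k (if (j : ℕ) ≤ i then (j : ℕ) else (j : ℕ) + q - 1))⟩ ⊗ₜ[ℤ]
      b ⟨q, fun j => X (sg k (i + (j : ℕ)))⟩)

/-- Normal form of the terms of `h(da⊗b)`. -/
def E2 (a : TotTup G → M) (b : TotTup G → N) (p q : ℕ) (X : ℕ → G) (i k : ℕ) :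
    M ⊗[ℤ] N :=
  ((-1 : ℤ) ^ (p * q + (q + 1) * i + 2 * q + k)) •
    (a ⟨p, fun j => X (if sg k (j : ℕ) ≤ i then sg k (j : ℕ) else sg k (j : ℕ) + q - 1)⟩ ⊗ₜ[ℤ]
      b ⟨q, fun j => X (i + (j : ℕ))⟩)

/-- Normal form of the terms of `(-1)^p h(a⊗db)`. -/
def E3 (a : TotTup G → M) (b : TotTup G → N) (p q : ℕ) (X : ℕ → G) (i k : ℕ) :
    M ⊗[ℤ] N :=
  ((-1 : ℤ) ^ (p * q + (q + 2) * i + 2 * p + q + 1 + k)) •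
    (a ⟨p, fun j => X (if (j : ℕ) ≤ i then (j : ℕ) else (j : ℕ) + q)⟩ ⊗ₜ[ℤ]
      b ⟨q, fun j => X (i + sg k (j : ℕ))⟩)

variable (a : TotTup G → M) (b : TotTup G → N) (p q : ℕ) (X : ℕ → G)

private lemma hC1 (hq : 1 ≤ q) (i k : ℕ) (hk : k ≤ i) :
    E1 a b p q X k i + E2 a b p q X (i + 1) k = 0 := by
  unfold E1 E2
  rw [show (fun j : Fin (p + 1) => X (sg k (if (j : ℕ) ≤ i then (j : ℕ) else (j : ℕ) + q - 1)))
      = (fun j : Fin (p + 1) =>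
        X (if sg k (j : ℕ) ≤ i + 1 then sg k (j : ℕ) else sg k (j : ℕ) + q - 1)) from
    funext fun j => congrArg X (by unfold sg; split_ifs <;> omega)]
  rw [show (fun j : Fin (q + 1) => X (sg k (i + (j : ℕ))))
      = (fun j : Fin (q + 1) => X (i + 1 + (j : ℕ))) from
    funext fun j => congrArg X (by unfold sg; split_ifs <;> omega)]
  refine npow_cancel ?_ _
  have h : (p * q + (q + 1) * i + q + k) + (p * q + (q + 1) * (i + 1) + 2 * q + k)
      = 2 * (p * q + (q + 1) * i + 2 * q + k) + 1 := by ring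
  omega

private lemma hC2 (hq : 1 ≤ q) (i k : ℕ) (hkq : k < q) :
    E1 a b p q X (i + 1 + k) i + E3 a b p q X i (1 + k) = 0 := by
  unfold E1 E3
  rw [show (fun j : Fin (p + 1) =>
        X (sg (i + 1 + k) (if (j : ℕ) ≤ i then (j : ℕ) else (j : ℕ) + q - 1)))
      = (fun j : Fin (p + 1) => X (if (j : ℕ) ≤ i then (j : ℕ) else (j : ℕ) + q)) from
    funext fun j => congrArg X (by unfold sg; split_ifs <;> omega)]
  rw [show (fun j : Fin (q + 1) => X (sg (i + 1 + k) (i + (j : ℕ))))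
      = (fun j : Fin (q + 1) => X (i + sg (1 + k) (j : ℕ))) from
    funext fun j => congrArg X (by unfold sg; split_ifs <;> omega)]
  refine npow_cancel ?_ _
  have h : (p * q + (q + 1) * i + q + (i + 1 + k)) + (p * q + (q + 2) * i + 2 * p + q + 1 + (1 + k))
      = 2 * (p * q + (q + 1) * i + i + q + p + k + 1) + 1 := by ring
  omega

private lemma hC3 (hq : 1 ≤ q) (i k : ℕ) :
    E1 a b p q X (i + q + 1 + k) i + E2 a b p q X i (i + 2 + k) = 0 := by
  unfold E1 E2
  rw [show (fun j : Fin (p + 1) =>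
        X (sg (i + q + 1 + k) (if (j : ℕ) ≤ i then (j : ℕ) else (j : ℕ) + q - 1)))
      = (fun j : Fin (p + 1) =>
        X (if sg (i + 2 + k) (j : ℕ) ≤ i then sg (i + 2 + k) (j : ℕ)
           else sg (i + 2 + k) (j : ℕ) + q - 1)) from
    funext fun j => congrArg X (by unfold sg; split_ifs <;> omega)]
  rw [show (fun j : Fin (q + 1) => X (sg (i + q + 1 + k) (i + (j : ℕ))))
      = (fun j : Fin (q + 1) => X (i + (j : ℕ))) from
    funext fun j => congrArg X (by have := j.isLt; unfold sg; split_ifs <;> omega)]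
  refine npow_cancel ?_ _
  have h : (p * q + (q + 1) * i + q + (i + q + 1 + k)) + (p * q + (q + 1) * i + 2 * q + (i + 2 + k))
      = 2 * (p * q + (q + 1) * i + i + 2 * q + k + 1) + 1 := by ring
  omega

private lemma hC4 (hq : 1 ≤ q) (i : ℕ) :
    E2 a b p q X (i + 1) (i + 1) + E3 a b p q X i 0 = 0 := by
  unfold E2 E3
  rw [show (fun j : Fin (p + 1) =>
        X (if sg (i + 1) (j : ℕ) ≤ i + 1 then sg (i + 1) (j : ℕ)
           else sg (i + 1) (j : ℕ) + q - 1))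
      = (fun j : Fin (p + 1) => X (if (j : ℕ) ≤ i then (j : ℕ) else (j : ℕ) + q)) from
    funext fun j => congrArg X (by unfold sg; split_ifs <;> omega)]
  rw [show (fun j : Fin (q + 1) => X (i + 1 + (j : ℕ)))
      = (fun j : Fin (q + 1) => X (i + sg 0 (j : ℕ))) from
    funext fun j => congrArg X (by unfold sg; split_ifs <;> omega)]
  refine npow_cancel ?_ _
  have h : (p * q + (q + 1) * (i + 1) + 2 * q + (i + 1)) + (p * q + (q + 2) * i + 2 * p + q + 1 + 0)
      = 2 * (p * q + (q + 1) * i + i + 2 * q + p + 1) + 1 := by ring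
  omega

private lemma hC5 (hq : 1 ≤ q) (i : ℕ) :
    E2 a b p q X i (i + 1) + E3 a b p q X i (q + 1) = 0 := by
  unfold E2 E3
  rw [show (fun j : Fin (p + 1) =>
        X (if sg (i + 1) (j : ℕ) ≤ i then sg (i + 1) (j : ℕ) else sg (i + 1) (j : ℕ) + q - 1))
      = (fun j : Fin (p + 1) => X (if (j : ℕ) ≤ i then (j : ℕ) else (j : ℕ) + q)) from
    funext fun j => congrArg X (by unfold sg; split_ifs <;> omega)]
  rw [show (fun j : Fin (q + 1) => X (i + (j : ℕ)))
      = (fun j : Fin (q + 1) => X (i + sg (q + 1) (j : ℕ))) from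
    funext fun j => congrArg X (by have := j.isLt; unfold sg; split_ifs <;> omega)]
  refine npow_cancel ?_ _
  have h : (p * q + (q + 1) * i + 2 * q + (i + 1)) + (p * q + (q + 2) * i + 2 * p + q + 1 + (q + 1))
      = 2 * (p * q + (q + 1) * i + i + 2 * q + p + 1) + 1 := by ring
  omega

private lemma hC8 (i : ℕ) :
    E3 a b p 0 X i 0 + E3 a b p 0 X (i + 1) 1 = 0 := by
  unfold E3
  rw [show (fun j : Fin (p + 1) => X (if (j : ℕ) ≤ i then (j : ℕ) else (j : ℕ) + 0))
      = (fun j : Fin (p + 1) => X (if (j : ℕ) ≤ i + 1 then (j : ℕ) else (j : ℕ) + 0)) from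
    funext fun j => congrArg X (by split_ifs <;> omega)]
  rw [show (fun j : Fin (0 + 1) => X (i + sg 0 (j : ℕ)))
      = (fun j : Fin (0 + 1) => X (i + 1 + sg 1 (j : ℕ))) from
    funext fun j => congrArg X (by have := j.isLt; unfold sg; split_ifs <;> omega)]
  refine npow_cancel ?_ _
  have h : (p * 0 + (0 + 2) * i + 2 * p + 0 + 1 + 0) + (p * 0 + (0 + 2) * (i + 1) + 2 * p + 0 + 1 + 1)
      = 2 * (2 * i + 2 * p + 2) + 1 := by ring
  omega


section NF

variable (a : TotTup G → M) (b : TotTup G → N)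

private lemma NF2 (p Q n : ℕ)
    (hbdeg : ∀ w : TotTup G, w.1 ≠ Q + 1 → b w = 0)
    (hn : n = p + (Q + 1)) (x : Tup G n) (X : ℕ → G)
    (hX : ∀ (t : ℕ) (h : t < n + 1), X t = x ⟨t, h⟩) :
    hT G (dT G a) b ⟨n, x⟩
      = ∑ i ∈ Finset.range (p + 1), ∑ k ∈ Finset.range (p + 2), E2 a b p (Q + 1) X i k := by
  rw [hT_collapseX (dT G a) b Q n (p + 1) hbdeg (by omega) (by omega) x X hX]
  refine Finset.sum_congr rfl fun i hi => ?_
  rw [dT_succ a p (fun j => X (if (j : ℕ) ≤ i then (j : ℕ) else (j : ℕ) + Q)),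
    TensorProduct.sum_tmul, Finset.smul_sum]
  trans (∑ k : Fin (p + 2), (fun kk : ℕ => E2 a b p (Q + 1) X i kk) (k : ℕ))
  · refine Finset.sum_congr rfl fun k _ => ?_
    rw [← TensorProduct.smul_tmul', smul_smul]
    unfold E2
    refine congrArg₂ (fun (c : ℤ) (t : M ⊗[ℤ] N) => c • t) (by ring)
      (congrArg₂ (fun (u : M) (v : N) => u ⊗ₜ[ℤ] v)
        (congrArg a (tt_congr rfl _ _ fun j hj => ?_)) rfl)
    rw [face_val]
    exact congrArg X (by dsimp only; unfold sg; split_ifs <;> omega)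
  · exact Fin.sum_univ_eq_sum_range _ _

private lemma NF3 (p q n : ℕ)
    (hadeg : ∀ w : TotTup G, w.1 ≠ p → a w = 0)
    (hbdeg : ∀ w : TotTup G, w.1 ≠ q → b w = 0)
    (hn : n = p + q) (x : Tup G n) (X : ℕ → G)
    (hX : ∀ (t : ℕ) (h : t < n + 1), X t = x ⟨t, h⟩) :
    ((-1 : ℤ) ^ p) • hT G a (dT G b) ⟨n, x⟩
      = ∑ i ∈ Finset.range p, ∑ k ∈ Finset.range (q + 2), E3 a b p q X i k := by
  rcases Nat.eq_zero_or_pos p with hp0 | hp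
  · subst hp0
    rw [hT_zero a (dT G b) 0 (q + 1) hadeg (dT_deg b q hbdeg) n x (by omega), smul_zero]
    simp
  · rw [hT_collapseX a (dT G b) q n p (dT_deg b q hbdeg) (by omega) (by omega) x X hX,
      Finset.smul_sum]
    refine Finset.sum_congr rfl fun i hi => ?_
    rw [dT_succ b q (fun j => X (i + (j : ℕ))), TensorProduct.tmul_sum, Finset.smul_sum,
      Finset.smul_sum]
    trans (∑ k : Fin (q + 2), (fun kk : ℕ => E3 a b p q X i kk) (k : ℕ))
    · refine Finset.sum_congr rfl fun k _ => ?_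
      rw [TensorProduct.tmul_smul, smul_smul, smul_smul]
      unfold E3
      refine congrArg₂ (fun (c : ℤ) (t : M ⊗[ℤ] N) => c • t) (by ring)
        (congrArg₂ (fun (u : M) (v : N) => u ⊗ₜ[ℤ] v)
          rfl (congrArg b (tt_congr rfl _ _ fun j hj => ?_)))
      rw [face_val]
    · exact Fin.sum_univ_eq_sum_range _ _

private lemma NF1 (p Q n : ℕ)
    (hadeg : ∀ w : TotTup G, w.1 ≠ p → a w = 0)
    (hbdeg : ∀ w : TotTup G, w.1 ≠ Q + 1 → b w = 0)
    (hn : n = p + (Q + 1)) (x : Tup G n) (X : ℕ → G)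
    (hX : ∀ (t : ℕ) (h : t < n + 1), X t = x ⟨t, h⟩) :
    dT G (hT G a b) ⟨n, x⟩
      = ∑ k ∈ Finset.range (n + 1), ∑ i ∈ Finset.range p, E1 a b p (Q + 1) X k i := by
  rcases Nat.eq_zero_or_pos p with hp0 | hp
  · subst hp0
    have hz : ∀ w : TotTup G, hT G a b w = 0 := by
      rintro ⟨m, z⟩
      exact hT_zero a b 0 (Q + 1) hadeg hbdeg m z (by omega)
    rw [dT_of_zero (hT G a b) hz]
    simp
  · have e1 : (⟨n, x⟩ : TotTup G) = ⟨(n - 1) + 1, fun j => X (j : ℕ)⟩ :=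
      tt_congr (by omega) _ _ fun j hj => (hX j hj).symm
    rw [e1, dT_succ]
    trans (∑ k : Fin ((n - 1) + 2), (fun kk : ℕ =>
        ∑ i ∈ Finset.range p, E1 a b p (Q + 1) X kk i) (k : ℕ))
    · refine Finset.sum_congr rfl fun k _ => ?_
      have hface : ∀ (t : ℕ) (h : t < (n - 1) + 1),
          (fun tt : ℕ => X (sg (k : ℕ) tt)) t
            = (face G k (fun j => X (j : ℕ))) ⟨t, h⟩ := by
        intro t h
        rw [face_val]
      rw [hT_collapseX a b Q (n - 1) p hbdeg (by omega) (by omega)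
          (face G k (fun j => X (j : ℕ))) (fun tt : ℕ => X (sg (k : ℕ) tt)) hface,
        Finset.smul_sum]
      refine Finset.sum_congr rfl fun i hi => ?_
      rw [smul_smul]
      unfold E1
      refine congrArg₂ (fun (c : ℤ) (t : M ⊗[ℤ] N) => c • t) (by ring)
        (congrArg₂ (fun (u : M) (v : N) => u ⊗ₜ[ℤ] v)
          (congrArg a (tt_congr rfl _ _ fun j hj => ?_)) rfl)
      exact congrArg X (congrArg (sg (k : ℕ)) (by dsimp only; split_ifs <;> omega))
    · rw [Fin.sum_univ_eq_sum_range
          (fun kk : ℕ => ∑ i ∈ Finset.range p, E1 a b p (Q + 1) X kk i) ((n - 1) + 2),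
        show (n - 1) + 2 = n + 1 by omega]

end NF

end Eterms

end AuxHomotopy

set_option maxHeartbeats 1000000 in
/-- For homogeneous cochains `a ∈ Cᵖ(G,M)` and `b ∈ C^q(G,N)`:
`(-1)^{pq} t₊(b∪a) − a∪b = h(da⊗b + (-1)ᵖ a⊗db) + d(h(a⊗b))`, where `t : N⊗M → M⊗N` is
the twist. -/
theorem statement14 (M N : Type) [AddCommGroup M] [AddCommGroup N]
    [DistribMulAction G M] [DistribMulAction G N] (p q : ℕ)
    (a : TotTup G → M) (b : TotTup G → N)
    (hadeg : ∀ w : TotTup G, w.1 ≠ p → a w = 0)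
    (haeq : ∀ (u : G) (w : TotTup G), a ⟨w.1, fun j => u * w.2 j⟩ = u • a w)
    (hbdeg : ∀ w : TotTup G, w.1 ≠ q → b w = 0)
    (hbeq : ∀ (u : G) (w : TotTup G), b ⟨w.1, fun j => u * w.2 j⟩ = u • b w) :
    ∀ w : TotTup G,
      ((-1 : ℤ) ^ (p * q)) • (TensorProduct.comm ℤ N M).toLinearMap (cupT G b a w)
          - cupT G a b w
        = hT G (dT G a) b w + ((-1 : ℤ) ^ p) • hT G a (dT G b) w + dT G (hT G a b) w := by
  rintro ⟨n, x⟩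
  by_cases hn : n = p + q
  · rcases Nat.eq_zero_or_pos q with hq0 | hq
    · subst hq0
      rcases Nat.eq_zero_or_pos p with hp0 | hp
      · subst hp0
        have hn0 : n = 0 := by omega
        subst hn0
        have s1 : dT G (hT G a b) ⟨0, x⟩ = 0 := dT_zero _ x
        have s2 : hT G (dT G a) b ⟨0, x⟩ = 0 :=
          hT_zero (dT G a) b 1 0 (dT_deg a 0 hadeg) hbdeg 0 x (by omega)
        have s3 : hT G a (dT G b) ⟨0, x⟩ = 0 :=
          hT_zero a (dT G b) 0 1 hadeg (dT_deg b 0 hbdeg) 0 x (by omega)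
        rw [s1, s2, s3, cup_collapse b a 0 0 hbdeg 0 rfl x, cup_collapse a b 0 0 hadeg 0 rfl x]
        simp only [LinearEquiv.coe_coe, TensorProduct.comm_tmul]
        have ea : a ⟨0, fun j : Fin 1 => x ⟨0 + (j : ℕ), by have := j.isLt; omega⟩⟩
            = a ⟨0, fun j : Fin 1 => x ⟨(j : ℕ), by have := j.isLt; omega⟩⟩ :=
          congrArg a (tt_congr rfl _ _ fun j hj =>
            congrArg x (Fin.ext (by simp only [Fin.val_mk]; omega)))
        have eb : b ⟨0, fun j : Fin 1 => x ⟨(j : ℕ), by have := j.isLt; omega⟩⟩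
            = b ⟨0, fun j : Fin 1 => x ⟨0 + (j : ℕ), by have := j.isLt; omega⟩⟩ :=
          congrArg b (tt_congr rfl _ _ fun j hj =>
            congrArg x (Fin.ext (by simp only [Fin.val_mk]; omega)))
        rw [ea, eb]
        norm_num
      · obtain ⟨P, rfl⟩ : ∃ P, p = P + 1 := ⟨p - 1, by omega⟩
        have s2 : hT G (dT G a) b ⟨n, x⟩ = 0 :=
          hT_zero (dT G a) b (P + 2) 0 (dT_deg a (P + 1) hadeg) hbdeg n x (by omega)
        have s1 : dT G (hT G a b) ⟨n, x⟩ = 0 :=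
          dT_of_zero _ (fun w => by
            rcases w with ⟨m, z⟩
            exact hT_zero a b (P + 1) 0 hadeg hbdeg m z (by omega)) _
        set X : ℕ → G := fun t => if h : t < n + 1 then x ⟨t, h⟩ else x ⟨0, by omega⟩
          with hXdef
        have hX : ∀ (t : ℕ) (h : t < n + 1), X t = x ⟨t, h⟩ := fun t h => dif_pos h
        rw [s1, s2, NF3 a b (P + 1) 0 n hadeg hbdeg hn x X hX]
        have hL1 : ((-1 : ℤ) ^ ((P + 1) * 0)) • (TensorProduct.comm ℤ N M).toLinearMap
            (cupT G b a ⟨n, x⟩) = E3 a b (P + 1) 0 X 0 1 := by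
          rw [cup_collapse b a 0 (P + 1) hbdeg n (by omega) x]
          simp only [LinearEquiv.coe_coe, TensorProduct.comm_tmul]
          unfold E3
          refine congrArg₂ (fun (c : ℤ) (t : M ⊗[ℤ] N) => c • t)
            (npow_congr ?_) (congrArg₂ (fun (u : M) (v : N) => u ⊗ₜ[ℤ] v)
              (congrArg a (tt_congr rfl _ _ fun j hj => ?_))
              (congrArg b (tt_congr rfl _ _ fun j hj => ?_)))
          · have h : (P + 1) * 0 + (0 + 2) * 0 + 2 * (P + 1) + 0 + 1 + 1
                = (P + 1) * 0 + 2 * (P + 2) := by ring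
            rw [h]
            generalize (P + 1) * 0 = A
            omega
          · dsimp only
            rw [show (if j ≤ 0 then j else j + 0) = 0 + j from by split_ifs <;> omega,
              hX (0 + j) (by omega)]
          · dsimp only
            rw [show 0 + sg 1 j = (j : ℕ) from by unfold sg; split_ifs <;> omega,
              hX j (by omega)]
        have hL2 : E3 a b (P + 1) 0 X P 0 = - cupT G a b ⟨n, x⟩ := by
          rw [cup_collapse a b (P + 1) 0 hadeg n (by omega) x]
          unfold E3
          rw [show ((-1 : ℤ) ^ ((P + 1) * 0 + (0 + 2) * P + 2 * (P + 1) + 0 + 1 + 0))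
              = (-1 : ℤ) from by
            have h : (P + 1) * 0 + (0 + 2) * P + 2 * (P + 1) + 0 + 1 + 0
                = 2 * (P + P + 1) + 1 := by ring
            rw [h, pow_succ, pow_mul, neg_one_sq, one_pow, one_mul]]
          rw [neg_one_smul]
          refine congrArg Neg.neg (congrArg₂ (fun (u : M) (v : N) => u ⊗ₜ[ℤ] v)
            (congrArg a (tt_congr rfl _ _ fun j hj => ?_))
            (congrArg b (tt_congr rfl _ _ fun j hj => ?_)))
          · dsimp only
            rw [show (if j ≤ P then j else j + 0) = j from by split_ifs <;> omega,
              hX j (by omega)]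
          · dsimp only
            rw [show P + sg 0 j = (P + 1) + j from by unfold sg; split_ifs <;> omega,
              hX ((P + 1) + j) (by omega)]
        have hL2' : cupT G a b ⟨n, x⟩ = - E3 a b (P + 1) 0 X P 0 := by rw [hL2, neg_neg]
        rw [hL1, hL2', sub_neg_eq_add, zero_add, add_zero]
        symm
        calc ∑ i ∈ Finset.range (P + 1), ∑ k ∈ Finset.range (0 + 2), E3 a b (P + 1) 0 X i k
            = ∑ i ∈ Finset.range (P + 1),
                (E3 a b (P + 1) 0 X i 0 + E3 a b (P + 1) 0 X i 1) := by
              refine Finset.sum_congr rfl fun i _ => ?_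
              rw [show (0 : ℕ) + 2 = 2 from rfl, Finset.sum_range_succ, Finset.sum_range_one]
          _ = (∑ i ∈ Finset.range (P + 1), E3 a b (P + 1) 0 X i 0)
              + ∑ i ∈ Finset.range (P + 1), E3 a b (P + 1) 0 X i 1 :=
              Finset.sum_add_distrib
          _ = ((∑ i ∈ Finset.range P, E3 a b (P + 1) 0 X i 0) + E3 a b (P + 1) 0 X P 0)
              + ((∑ i ∈ Finset.range P, E3 a b (P + 1) 0 X (i + 1) 1)
                + E3 a b (P + 1) 0 X 0 1) := by
              rw [Finset.sum_range_succ, Finset.sum_range_succ']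
          _ = E3 a b (P + 1) 0 X 0 1 + E3 a b (P + 1) 0 X P 0 := by
              rw [add_add_add_comm]
              have hz : (∑ i ∈ Finset.range P, E3 a b (P + 1) 0 X i 0)
                  + ∑ i ∈ Finset.range P, E3 a b (P + 1) 0 X (i + 1) 1 = 0 := by
                rw [← Finset.sum_add_distrib]
                exact Finset.sum_eq_zero fun i _ => hC8 a b (P + 1) X i
              rw [hz, zero_add, add_comm]
    · obtain ⟨Q, rfl⟩ : ∃ Q, q = Q + 1 := ⟨q - 1, by omega⟩
      set X : ℕ → G := fun t => if h : t < n + 1 then x ⟨t, h⟩ else x ⟨0, by omega⟩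
        with hXdef
      have hX : ∀ (t : ℕ) (h : t < n + 1), X t = x ⟨t, h⟩ := fun t h => dif_pos h
      rw [NF1 a b p Q n hadeg hbdeg hn x X hX, NF2 a b p Q n hbdeg hn x X hX,
        NF3 a b p (Q + 1) n hadeg hbdeg hn x X hX]
      have hL1 : ((-1 : ℤ) ^ (p * (Q + 1))) • (TensorProduct.comm ℤ N M).toLinearMap
          (cupT G b a ⟨n, x⟩) = E2 a b p (Q + 1) X 0 0 := by
        rw [cup_collapse b a (Q + 1) p hbdeg n (by omega) x]
        simp only [LinearEquiv.coe_coe, TensorProduct.comm_tmul]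
        unfold E2
        refine congrArg₂ (fun (c : ℤ) (t : M ⊗[ℤ] N) => c • t)
          (npow_congr ?_) (congrArg₂ (fun (u : M) (v : N) => u ⊗ₜ[ℤ] v)
            (congrArg a (tt_congr rfl _ _ fun j hj => ?_))
            (congrArg b (tt_congr rfl _ _ fun j hj => ?_)))
        · have h : p * (Q + 1) + ((Q + 1) + 1) * 0 + 2 * (Q + 1) + 0
              = p * (Q + 1) + 2 * (Q + 1) := by ring
          rw [h]
          generalize p * (Q + 1) = A
          omega
        · dsimp only
          rw [show (if sg 0 j ≤ 0 then sg 0 j else sg 0 j + (Q + 1) - 1) = (Q + 1) + j from by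
              unfold sg; split_ifs <;> omega,
            hX ((Q + 1) + j) (by omega)]
        · dsimp only
          rw [show 0 + j = j from by omega, hX j (by omega)]
      have hL2 : E2 a b p (Q + 1) X p (p + 1) = - cupT G a b ⟨n, x⟩ := by
        rw [cup_collapse a b p (Q + 1) hadeg n (by omega) x]
        unfold E2
        rw [show ((-1 : ℤ) ^ (p * (Q + 1) + ((Q + 1) + 1) * p + 2 * (Q + 1) + (p + 1)))
            = (-1 : ℤ) from by
          have h : p * (Q + 1) + ((Q + 1) + 1) * p + 2 * (Q + 1) + (p + 1)
              = 2 * (p * (Q + 1) + p + (Q + 1)) + 1 := by ring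
          rw [h, pow_succ, pow_mul, neg_one_sq, one_pow, one_mul]]
        rw [neg_one_smul]
        refine congrArg Neg.neg (congrArg₂ (fun (u : M) (v : N) => u ⊗ₜ[ℤ] v)
          (congrArg a (tt_congr rfl _ _ fun j hj => ?_))
          (congrArg b (tt_congr rfl _ _ fun j hj => ?_)))
        · dsimp only
          rw [show (if sg (p + 1) j ≤ p then sg (p + 1) j else sg (p + 1) j + (Q + 1) - 1) = j
              from by unfold sg; split_ifs <;> omega,
            hX j (by omega)]
        · dsimp only
          rw [hX (p + j) (by omega)]
      have hL2' : cupT G a b ⟨n, x⟩ = - E2 a b p (Q + 1) X p (p + 1) := by rw [hL2, neg_neg]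
      rw [hL1, hL2', sub_neg_eq_add]
      have hd1 : (∑ k ∈ Finset.range (n + 1), ∑ i ∈ Finset.range p, E1 a b p (Q + 1) X k i)
          = (∑ i ∈ Finset.range p, ∑ k ∈ Finset.range (i + 1), E1 a b p (Q + 1) X k i)
            + (∑ i ∈ Finset.range p, ∑ k ∈ Finset.range (Q + 1),
                E1 a b p (Q + 1) X (i + 1 + k) i)
            + (∑ i ∈ Finset.range p, ∑ k ∈ Finset.range (p - i),
                E1 a b p (Q + 1) X (i + (Q + 1) + 1 + k) i) := by
        rw [Finset.sum_comm, ← Finset.sum_add_distrib, ← Finset.sum_add_distrib]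
        refine Finset.sum_congr rfl fun i hi => ?_
        have hip : i < p := Finset.mem_range.mp hi
        rw [show n + 1 = (i + 1) + ((Q + 1) + (p - i)) from by omega,
          Finset.sum_range_add,
          Finset.sum_range_add (fun k => E1 a b p (Q + 1) X (i + 1 + k) i) (Q + 1) (p - i),
          ← add_assoc]
        congr 1
        refine Finset.sum_congr rfl fun k _ => ?_
        rw [show (i + 1) + ((Q + 1) + k) = i + (Q + 1) + 1 + k from by omega]
      have hd2 : (∑ i ∈ Finset.range (p + 1), ∑ k ∈ Finset.range (p + 2),
            E2 a b p (Q + 1) X i k)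
          = (∑ i ∈ Finset.range p, ∑ k ∈ Finset.range (i + 1), E2 a b p (Q + 1) X (i + 1) k)
            + ((∑ i ∈ Finset.range p, E2 a b p (Q + 1) X (i + 1) (i + 1))
              + E2 a b p (Q + 1) X 0 0)
            + ((∑ i ∈ Finset.range p, E2 a b p (Q + 1) X i (i + 1))
              + E2 a b p (Q + 1) X p (p + 1))
            + (∑ i ∈ Finset.range p, ∑ k ∈ Finset.range (p - i),
                E2 a b p (Q + 1) X i (i + 2 + k)) := by
        have step : ∀ i ∈ Finset.range (p + 1), (∑ k ∈ Finset.range (p + 2),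
              E2 a b p (Q + 1) X i k)
            = (∑ k ∈ Finset.range i, E2 a b p (Q + 1) X i k) + E2 a b p (Q + 1) X i i
              + E2 a b p (Q + 1) X i (i + 1)
              + (∑ k ∈ Finset.range (p - i), E2 a b p (Q + 1) X i (i + 2 + k)) := by
          intro i hi
          have hip : i < p + 1 := Finset.mem_range.mp hi
          rw [show p + 2 = i + (1 + (1 + (p - i))) from by omega,
            Finset.sum_range_add, Finset.sum_range_add, Finset.sum_range_add,
            Finset.sum_range_one, Finset.sum_range_one,
            show i + 0 = i from by omega, show i + (1 + 0) = i + 1 from by omega]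
          have hmid : (∑ k ∈ Finset.range (p - i), E2 a b p (Q + 1) X i (i + (1 + (1 + k))))
              = ∑ k ∈ Finset.range (p - i), E2 a b p (Q + 1) X i (i + 2 + k) :=
            Finset.sum_congr rfl fun k _ => by
              rw [show i + (1 + (1 + k)) = i + 2 + k from by omega]
          rw [hmid]
          abel
        rw [Finset.sum_congr rfl step, Finset.sum_add_distrib, Finset.sum_add_distrib,
          Finset.sum_add_distrib, Finset.sum_range_succ', Finset.sum_range_succ',
          Finset.sum_range_succ, Finset.sum_range_succ, Finset.sum_range_zero,
          Nat.sub_self, Finset.sum_range_zero]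
        abel
      have hd3 : (∑ i ∈ Finset.range p, ∑ k ∈ Finset.range ((Q + 1) + 2),
            E3 a b p (Q + 1) X i k)
          = (∑ i ∈ Finset.range p, E3 a b p (Q + 1) X i 0)
            + (∑ i ∈ Finset.range p, ∑ k ∈ Finset.range (Q + 1), E3 a b p (Q + 1) X i (1 + k))
            + (∑ i ∈ Finset.range p, E3 a b p (Q + 1) X i ((Q + 1) + 1)) := by
        rw [← Finset.sum_add_distrib, ← Finset.sum_add_distrib]
        refine Finset.sum_congr rfl fun i _ => ?_
        rw [show (Q + 1) + 2 = 1 + ((Q + 1) + 1) from by omega, Finset.sum_range_add,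
          Finset.sum_range_add, Finset.sum_range_one, Finset.sum_range_one,
          show 1 + ((Q + 1) + 0) = (Q + 1) + 1 from by omega]
        abel
      have z1 : (∑ i ∈ Finset.range p, ∑ k ∈ Finset.range (i + 1), E1 a b p (Q + 1) X k i)
          + (∑ i ∈ Finset.range p, ∑ k ∈ Finset.range (i + 1), E2 a b p (Q + 1) X (i + 1) k)
            = 0 := by
        rw [← Finset.sum_add_distrib]
        refine Finset.sum_eq_zero fun i _ => ?_
        rw [← Finset.sum_add_distrib]
        refine Finset.sum_eq_zero fun k hk => ?_
        exact hC1 a b p (Q + 1) X (by omega) i k (by have := Finset.mem_range.mp hk; omega)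
      have z2 : (∑ i ∈ Finset.range p, ∑ k ∈ Finset.range (Q + 1),
            E1 a b p (Q + 1) X (i + 1 + k) i)
          + (∑ i ∈ Finset.range p, ∑ k ∈ Finset.range (Q + 1), E3 a b p (Q + 1) X i (1 + k))
            = 0 := by
        rw [← Finset.sum_add_distrib]
        refine Finset.sum_eq_zero fun i _ => ?_
        rw [← Finset.sum_add_distrib]
        refine Finset.sum_eq_zero fun k hk => ?_
        exact hC2 a b p (Q + 1) X (by omega) i k (by have := Finset.mem_range.mp hk; omega)
      have z3 : (∑ i ∈ Finset.range p, ∑ k ∈ Finset.range (p - i),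
            E1 a b p (Q + 1) X (i + (Q + 1) + 1 + k) i)
          + (∑ i ∈ Finset.range p, ∑ k ∈ Finset.range (p - i),
            E2 a b p (Q + 1) X i (i + 2 + k)) = 0 := by
        rw [← Finset.sum_add_distrib]
        refine Finset.sum_eq_zero fun i _ => ?_
        rw [← Finset.sum_add_distrib]
        refine Finset.sum_eq_zero fun k _ => ?_
        exact hC3 a b p (Q + 1) X (by omega) i k
      have z4 : (∑ i ∈ Finset.range p, E2 a b p (Q + 1) X (i + 1) (i + 1))
          + (∑ i ∈ Finset.range p, E3 a b p (Q + 1) X i 0) = 0 := by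
        rw [← Finset.sum_add_distrib]
        exact Finset.sum_eq_zero fun i _ => hC4 a b p (Q + 1) X (by omega) i
      have z5 : (∑ i ∈ Finset.range p, E2 a b p (Q + 1) X i (i + 1))
          + (∑ i ∈ Finset.range p, E3 a b p (Q + 1) X i ((Q + 1) + 1)) = 0 := by
        rw [← Finset.sum_add_distrib]
        exact Finset.sum_eq_zero fun i _ => hC5 a b p (Q + 1) X (by omega) i
      symm
      rw [hd1, hd2, hd3]
      calc ((∑ i ∈ Finset.range p, ∑ k ∈ Finset.range (i + 1), E2 a b p (Q + 1) X (i + 1) k)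
            + ((∑ i ∈ Finset.range p, E2 a b p (Q + 1) X (i + 1) (i + 1))
              + E2 a b p (Q + 1) X 0 0)
            + ((∑ i ∈ Finset.range p, E2 a b p (Q + 1) X i (i + 1))
              + E2 a b p (Q + 1) X p (p + 1))
            + (∑ i ∈ Finset.range p, ∑ k ∈ Finset.range (p - i),
                E2 a b p (Q + 1) X i (i + 2 + k)))
          + ((∑ i ∈ Finset.range p, E3 a b p (Q + 1) X i 0)
            + (∑ i ∈ Finset.range p, ∑ k ∈ Finset.range (Q + 1), E3 a b p (Q + 1) X i (1 + k))
            + (∑ i ∈ Finset.range p, E3 a b p (Q + 1) X i ((Q + 1) + 1)))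
          + ((∑ i ∈ Finset.range p, ∑ k ∈ Finset.range (i + 1), E1 a b p (Q + 1) X k i)
            + (∑ i ∈ Finset.range p, ∑ k ∈ Finset.range (Q + 1),
                E1 a b p (Q + 1) X (i + 1 + k) i)
            + (∑ i ∈ Finset.range p, ∑ k ∈ Finset.range (p - i),
                E1 a b p (Q + 1) X (i + (Q + 1) + 1 + k) i))
          = ((∑ i ∈ Finset.range p, ∑ k ∈ Finset.range (i + 1), E1 a b p (Q + 1) X k i)
              + (∑ i ∈ Finset.range p, ∑ k ∈ Finset.range (i + 1),
                E2 a b p (Q + 1) X (i + 1) k))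
            + ((∑ i ∈ Finset.range p, ∑ k ∈ Finset.range (Q + 1),
                E1 a b p (Q + 1) X (i + 1 + k) i)
              + (∑ i ∈ Finset.range p, ∑ k ∈ Finset.range (Q + 1),
                E3 a b p (Q + 1) X i (1 + k)))
            + ((∑ i ∈ Finset.range p, ∑ k ∈ Finset.range (p - i),
                E1 a b p (Q + 1) X (i + (Q + 1) + 1 + k) i)
              + (∑ i ∈ Finset.range p, ∑ k ∈ Finset.range (p - i),
                E2 a b p (Q + 1) X i (i + 2 + k)))
            + ((∑ i ∈ Finset.range p, E2 a b p (Q + 1) X (i + 1) (i + 1))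
              + (∑ i ∈ Finset.range p, E3 a b p (Q + 1) X i 0))
            + ((∑ i ∈ Finset.range p, E2 a b p (Q + 1) X i (i + 1))
              + (∑ i ∈ Finset.range p, E3 a b p (Q + 1) X i ((Q + 1) + 1)))
            + (E2 a b p (Q + 1) X 0 0 + E2 a b p (Q + 1) X p (p + 1)) := by abel
        _ = E2 a b p (Q + 1) X 0 0 + E2 a b p (Q + 1) X p (p + 1) := by
            rw [z1, z2, z3, z4, z5]
            abel
  · have c1 : cupT G a b ⟨n, x⟩ = 0 := cup_zero a b p q hadeg hbdeg n hn x
    have c2 : cupT G b a ⟨n, x⟩ = 0 := cup_zero b a q p hbdeg hadeg n (by omega) x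
    have s2 : hT G (dT G a) b ⟨n, x⟩ = 0 :=
      hT_zero (dT G a) b (p + 1) q (dT_deg a p hadeg) hbdeg n x (by omega)
    have s3 : hT G a (dT G b) ⟨n, x⟩ = 0 :=
      hT_zero a (dT G b) p (q + 1) hadeg (dT_deg b q hbdeg) n x (by omega)
    have s1 : dT G (hT G a b) ⟨n, x⟩ = 0 := by
      rcases Nat.eq_zero_or_pos (p + q) with hpq | hpq
      · exact dT_of_zero _ (fun w => by
          rcases w with ⟨m, z⟩
          exact hT_zero a b p q hadeg hbdeg m z (by omega)) _
      · refine dT_deg (hT G a b) (p + q - 1) (fun w hw => ?_) _ (show n ≠ p + q - 1 + 1 by omega)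
        rcases w with ⟨m, z⟩
        have hm : m ≠ p + q - 1 := hw
        exact hT_zero a b p q hadeg hbdeg m z (by omega)
    rw [c1, c2, s1, s2, s3, map_zero, smul_zero, smul_zero, sub_zero]
    simp
end
end
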